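/- arXiv:0907.5273 — 8 statements merged into one kernel-verified Lean document; each statement's English description precedes it below -/
import Mathlib

section
/- Let (X, 𝒜, μ) be a finite measure space and let V ⊆ U ⊆ 𝒜 be sub-σ-algebras such that U is atomless over V. Then there exists a U-measurable function h : X → [0,1] such that for every t ∈ [0,1], μ[χ_{{h ≤ t}} | V] = t a.e. (where the right-hand side is the constant function t). -/
open MeasureTheory ENNReal

/-- `U` is atomless over `V` (both sub-σ-algebras on `X`): every `U`-measurable set `A` of
positive finite measure admits a `U`-measurable `B` such that `A ∩ B` differs from `A ∩ C`
on a set of positive measure, for every `V`-measurable `C`. -/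
def AtomlessOver {X : Type*} {_mX : MeasurableSpace X} (μ : Measure X)
    (U V : MeasurableSpace X) : Prop :=
  ∀ A : Set X, MeasurableSet[U] A → 0 < μ A → μ A < ⊤ →
    ∃ B : Set X, MeasurableSet[U] B ∧
      ∀ C : Set X, MeasurableSet[V] C → 0 < μ (symmDiff (A ∩ B) (A ∩ C))

/-!
Atomlessness yields, inside any non-null `U`-set `A`, non-null `U`-subsets of arbitrarily small
conditional probability given `V`. A greedy exhaustion then shows that every `V`-measurable `f`
with `0 ≤ f ≤ μ[1_A|V]` is the conditional probability of a `U`-subset of `A`; in particular a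
`U`-set of constant conditional probability can be split at any smaller constant. Splitting
dyadically gives sets `S n k`, increasing in `k / 2 ^ n`, of conditional probability
`k / 2 ^ n`, and `h x := inf {k / 2 ^ n | x ∈ S n k}` works: `{h ≤ t}` lies between
`S n ⌊t 2ⁿ⌋` and `S n (⌊t 2ⁿ⌋ + 1)`.
-/

open Set Filter Topology

section CondExpIndicator

variable {X : Type*} {V mX : MeasurableSpace X} {μ : Measure X} {S T : Set X}

theorem ae_le_of_forall_setIntegral_le_of_stronglyMeasurable (hV : V ≤ mX) {f g : X → ℝ}
    (hf : StronglyMeasurable[V] f) (hg : StronglyMeasurable[V] g) (hfi : Integrable f μ)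
    (hgi : Integrable g μ)
    (hfg : ∀ C, MeasurableSet[V] C → ∫ x in C, f x ∂μ ≤ ∫ x in C, g x ∂μ) :
    f ≤ᵐ[μ] g :=
  ae_le_of_ae_le_trim <| ae_le_of_forall_setIntegral_le (hfi.trim hV hf) (hgi.trim hV hg)
    fun C hC _ => by
      rw [← setIntegral_trim hV hf hC, ← setIntegral_trim hV hg hC]
      exact hfg C hC

variable [IsFiniteMeasure μ]

theorem integrable_indicator_one (hS : MeasurableSet S) :
    Integrable (S.indicator (1 : X → ℝ)) μ :=
  (integrable_const 1).indicator hS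

theorem condExp_univ_indicator_one (hV : V ≤ mX) :
    μ[(univ : Set X).indicator (1 : X → ℝ)|V] = fun _ => (1 : ℝ) := by
  rw [indicator_univ]
  exact condExp_const hV 1

theorem condExp_indicator_one_mono (hS : MeasurableSet S) (hT : MeasurableSet T)
    (hST : S ⊆ T) : μ[S.indicator (1 : X → ℝ)|V] ≤ᵐ[μ] μ[T.indicator (1 : X → ℝ)|V] :=
  condExp_mono (integrable_indicator_one hS) (integrable_indicator_one hT)
    (.of_forall (indicator_le_indicator_of_subset hST fun _ => zero_le_one))

theorem condExp_indicator_one_le_one (hV : V ≤ mX) (hS : MeasurableSet S) :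
    μ[S.indicator (1 : X → ℝ)|V] ≤ᵐ[μ] fun _ => (1 : ℝ) := by
  simpa only [condExp_univ_indicator_one hV] using
    condExp_indicator_one_mono (V := V) (μ := μ) hS MeasurableSet.univ (subset_univ S)

theorem condExp_indicator_one_union (hS : MeasurableSet S) (hT : MeasurableSet T)
    (hST : Disjoint S T) :
    μ[(S ∪ T).indicator (1 : X → ℝ)|V]
      =ᵐ[μ] μ[S.indicator (1 : X → ℝ)|V] + μ[T.indicator (1 : X → ℝ)|V] := by
  rw [indicator_union_of_disjoint hST]
  exact condExp_add (integrable_indicator_one hS) (integrable_indicator_one hT) V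

theorem condExp_indicator_one_diff (hS : MeasurableSet S) (hT : MeasurableSet T)
    (hST : S ⊆ T) :
    μ[(T \ S).indicator (1 : X → ℝ)|V]
      =ᵐ[μ] μ[T.indicator (1 : X → ℝ)|V] - μ[S.indicator (1 : X → ℝ)|V] := by
  rw [indicator_sdiff hST]
  exact condExp_sub (integrable_indicator_one hT) (integrable_indicator_one hS) V

theorem condExp_indicator_one_inter (hS : MeasurableSet S) {D : Set X}
    (hD : MeasurableSet[V] D) :
    μ[(S ∩ D).indicator (1 : X → ℝ)|V] =ᵐ[μ] D.indicator μ[S.indicator (1 : X → ℝ)|V] := by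
  rw [inter_comm, ← indicator_indicator]
  exact condExp_indicator (integrable_indicator_one hS) hD

theorem setIntegral_condExp_indicator_one (hV : V ≤ mX) (hS : MeasurableSet S) {C : Set X}
    (hC : MeasurableSet[V] C) :
    ∫ x in C, μ[S.indicator (1 : X → ℝ)|V] x ∂μ = μ.real (S ∩ C) := by
  rw [setIntegral_condExp hV (integrable_indicator_one hS) hC, integral_indicator_one hS,
    measureReal_restrict_apply hS]

theorem condExp_indicator_one_iUnion_le (hV : V ≤ mX) {B : ℕ → Set X}
    (hB : ∀ n, MeasurableSet (B n)) (hBmono : Monotone B) {f : X → ℝ}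
    (hf : StronglyMeasurable[V] f) (hfi : Integrable f μ)
    (hBf : ∀ n, μ[(B n).indicator (1 : X → ℝ)|V] ≤ᵐ[μ] f) :
    μ[(⋃ n, B n).indicator (1 : X → ℝ)|V] ≤ᵐ[μ] f := by
  refine ae_le_of_forall_setIntegral_le_of_stronglyMeasurable hV stronglyMeasurable_condExp hf
    integrable_condExp hfi fun C hC => ?_
  have hBC : ∀ n, μ.real (B n ∩ C) ≤ ∫ x in C, f x ∂μ := fun n => by
    rw [← setIntegral_condExp_indicator_one hV (hB n) hC]
    exact setIntegral_mono_ae integrable_condExp.integrableOn hfi.integrableOn (hBf n)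
  rw [setIntegral_condExp_indicator_one hV (MeasurableSet.iUnion hB) hC, iUnion_inter]
  exact le_of_tendsto' ((ENNReal.tendsto_toReal (measure_ne_top _ _)).comp
    (tendsto_measure_iUnion_atTop fun _ _ hij => inter_subset_inter_left C (hBmono hij))) hBC

end CondExpIndicator

section Exhaustion

variable {X : Type*} {m mX : MeasurableSpace X} {μ : Measure X} [IsFiniteMeasure μ]
  {p : Set X → Prop}

theorem exists_extension_measure_diff_le_two_mul {B : Set X} (hB : p B) :
    ∃ B'', p B'' ∧ B ⊆ B'' ∧ ∀ B', B ⊆ B' → p B' → μ (B' \ B) ≤ 2 * μ (B'' \ B) := by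
  set s := ⨆ B' : {B' // B ⊆ B' ∧ p B'}, μ (B'.1 \ B)
  have hle : ∀ B', B ⊆ B' → p B' → μ (B' \ B) ≤ s := fun B' h1 h2 =>
    le_iSup (fun B' : {B' // B ⊆ B' ∧ p B'} => μ (B'.1 \ B)) ⟨B', h1, h2⟩
  rcases eq_or_ne s 0 with hs | hs
  · exact ⟨B, hB, subset_rfl, fun B' h1 h2 => (hle B' h1 h2).trans (hs ▸ zero_le)⟩
  have hs_top : s ≠ ⊤ :=
    ne_top_of_le_ne_top (measure_ne_top μ univ) (iSup_le fun _ => measure_mono (subset_univ _))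
  obtain ⟨⟨B'', hBB'', hB''⟩, hlt⟩ := lt_iSup_iff.1 (ENNReal.half_lt_self hs hs_top)
  refine ⟨B'', hB'', hBB'', fun B' h1 h2 => (hle B' h1 h2).trans ?_⟩
  calc s = s / 2 + s / 2 := (ENNReal.add_halves s).symm
    _ ≤ μ (B'' \ B) + μ (B'' \ B) := add_le_add hlt.le hlt.le
    _ = 2 * μ (B'' \ B) := (two_mul _).symm

theorem exists_maximal_up_to_null (hm : m ≤ mX) (hp : ∀ B, p B → MeasurableSet[m] B)
    (hempty : p ∅) (hiUnion : ∀ B : ℕ → Set X, Monotone B → (∀ n, p (B n)) → p (⋃ n, B n))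
    (hsub : ∀ B B', B ⊆ B' → MeasurableSet[m] B → p B' → p B) :
    ∃ B, p B ∧ ∀ B', B ⊆ B' → p B' → μ (B' \ B) = 0 := by
  choose! next hnext hsubnext hmax using
    fun B (hB : p B) => exists_extension_measure_diff_le_two_mul (μ := μ) hB
  set Bn : ℕ → Set X := fun n => next^[n] ∅
  have hsucc : ∀ n, Bn (n + 1) = next (Bn n) := fun n => Function.iterate_succ_apply' next n ∅
  have hBn : ∀ n, p (Bn n) := fun n => by
    induction n with
    | zero => exact hempty
    | succ n ih => exact hsucc n ▸ hnext _ ih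
  have hmono : Monotone Bn := monotone_nat_of_le_succ fun n => hsucc n ▸ hsubnext _ (hBn n)
  have hgain : Tendsto (fun n => μ (Bn (n + 1) \ Bn n)) atTop (𝓝 0) := by
    have hsum : ∑' n, μ (disjointed Bn n) ≠ ⊤ := by
      rw [← measure_iUnion (disjoint_disjointed Bn)
        (MeasurableSet.disjointed fun n => hm _ (hp _ (hBn n)))]
      exact measure_ne_top μ _
    simpa only [Function.comp_def, hmono.disjointed_add_one] using
      (ENNReal.tendsto_atTop_zero_of_tsum_ne_top hsum).comp (tendsto_add_atTop_nat 1)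
  refine ⟨⋃ n, Bn n, hiUnion Bn hmono hBn, fun B' hB'B hB' => ?_⟩
  -- `B' \ ⋃ n, Bn n` could have been added at every step, so its measure is at most twice
  -- every gain.
  have hle : ∀ n, μ (B' \ ⋃ n, Bn n) ≤ 2 * μ (Bn (n + 1) \ Bn n) := by
    intro n
    have hP : p (Bn n ∪ (B' \ ⋃ n, Bn n)) :=
      hsub _ _ (union_subset ((subset_iUnion Bn n).trans hB'B) sdiff_subset)
        ((hp _ (hBn n)).union ((hp _ hB').diff (.iUnion fun n => hp _ (hBn n)))) hB'
    rw [hsucc]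
    refine le_trans (measure_mono fun x hx => ?_) (hmax _ (hBn n) _ subset_union_left hP)
    exact ⟨Or.inr hx, fun h => hx.2 (mem_iUnion.2 ⟨n, h⟩)⟩
  have h2gain : Tendsto (fun n => 2 * μ (Bn (n + 1) \ Bn n)) atTop (𝓝 0) := by
    simpa using ENNReal.Tendsto.const_mul hgain (Or.inr ENNReal.ofNat_ne_top)
  exact le_antisymm (ge_of_tendsto' h2gain hle) zero_le

end Exhaustion

theorem exists_pos_measure_le_of_not_ae_le_zero {X : Type*} {mX : MeasurableSpace X}
    {μ : Measure X} {f : X → ℝ} (hf : ¬ f ≤ᵐ[μ] 0) : ∃ ε > 0, 0 < μ {x | ε ≤ f x} := by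
  by_contra! H
  refine hf ?_
  have hnull : ∀ᵐ x ∂μ, ∀ n : ℕ, x ∉ {x | 1 / ((n : ℝ) + 1) ≤ f x} := ae_all_iff.2 fun n =>
    measure_eq_zero_iff_ae_notMem.1 (nonpos_iff_eq_zero.1 (H _ (by positivity)))
  filter_upwards [hnull] with x hx
  by_contra! hpos
  obtain ⟨n, hn⟩ := exists_nat_one_div_lt hpos
  exact hx n hn.le

namespace AtomlessOver

variable {X : Type*} {U V mX : MeasurableSpace X} {μ : Measure X} [IsFiniteMeasure μ]
  {A : Set X}

theorem exists_subset_condExp_le_half (hUV : AtomlessOver μ U V) (hVU : V ≤ U) (hU : U ≤ mX)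
    (hA : MeasurableSet[U] A) (hA0 : 0 < μ A) :
    ∃ B ⊆ A, MeasurableSet[U] B ∧ 0 < μ B ∧
      μ[B.indicator (1 : X → ℝ)|V] ≤ᵐ[μ] fun x => μ[A.indicator (1 : X → ℝ)|V] x / 2 := by
  obtain ⟨B₀, hB₀, hsymm⟩ := hUV A hA hA0 (measure_lt_top μ A)
  set c := A ∩ B₀
  have hc : MeasurableSet[U] c := hA.inter hB₀
  set gc := μ[c.indicator (1 : X → ℝ)|V]
  set gA := μ[A.indicator (1 : X → ℝ)|V]
  set D := {x | 2 * gc x ≤ gA x}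
  have hD : MeasurableSet[V] D := measurableSet_le
    (stronglyMeasurable_condExp.measurable.const_mul 2) stronglyMeasurable_condExp.measurable
  -- The subset takes `c` where `c` has at most half the conditional mass of `A`, and `A \ c`
  -- elsewhere; as the symmetric difference of `c` and `A ∩ Dᶜ` it is non-null.
  have hB : symmDiff c (A ∩ Dᶜ) = (c ∩ D) ∪ ((A \ c) ∩ Dᶜ) := by
    ext x
    simp only [c, symmDiff_def, sup_eq_union, mem_union, Set.mem_sdiff, mem_inter_iff,
      mem_compl_iff]
    tauto
  refine ⟨(c ∩ D) ∪ ((A \ c) ∩ Dᶜ), union_subset (inter_subset_left.trans inter_subset_left)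
    (inter_subset_left.trans sdiff_subset), (hc.inter (hVU _ hD)).union
    ((hA.diff hc).inter (hVU _ hD.compl)), hB ▸ hsymm _ hD.compl, ?_⟩
  have hdisj : Disjoint (c ∩ D) ((A \ c) ∩ Dᶜ) :=
    disjoint_left.2 fun x hx hx' => hx'.2 hx.2
  filter_upwards [condExp_indicator_one_union (V := V) (μ := μ) (hU _ (hc.inter (hVU _ hD)))
      (hU _ ((hA.diff hc).inter (hVU _ hD.compl))) hdisj,
    condExp_indicator_one_inter (μ := μ) (hU _ hc) hD,
    condExp_indicator_one_inter (μ := μ) (hU _ (hA.diff hc)) hD.compl,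
    condExp_indicator_one_diff (V := V) (μ := μ) (hU _ hc) (hU _ hA) inter_subset_left]
    with x hunion hcD hAcD hAc
  rw [hunion, Pi.add_apply, hcD, hAcD]
  by_cases hx : x ∈ D
  · simp only [indicator_of_mem hx, indicator_of_notMem (notMem_compl_iff.2 hx)]
    linarith [show 2 * gc x ≤ gA x from hx]
  · simp only [indicator_of_notMem hx, indicator_of_mem (mem_compl hx), hAc, Pi.sub_apply]
    linarith [not_le.1 (show ¬ 2 * gc x ≤ gA x from hx)]

theorem exists_subset_condExp_le (hUV : AtomlessOver μ U V) (hVU : V ≤ U) (hU : U ≤ mX)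
    (hA : MeasurableSet[U] A) (hA0 : 0 < μ A) {ε : ℝ} (hε : 0 < ε) :
    ∃ B ⊆ A, MeasurableSet[U] B ∧ 0 < μ B ∧
      μ[B.indicator (1 : X → ℝ)|V] ≤ᵐ[μ] fun _ => ε := by
  have hpow : ∀ n : ℕ, ∃ B ⊆ A, MeasurableSet[U] B ∧ 0 < μ B ∧
      μ[B.indicator (1 : X → ℝ)|V] ≤ᵐ[μ] fun _ => (1 / 2 : ℝ) ^ n := by
    intro n
    induction n with
    | zero => exact ⟨A, subset_rfl, hA, hA0, by
        simpa using condExp_indicator_one_le_one (hVU.trans hU) (hU _ hA)⟩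
    | succ n ih =>
      obtain ⟨B, hBA, hB, hB0, hBle⟩ := ih
      obtain ⟨B', hB'B, hB', hB'0, hB'le⟩ := hUV.exists_subset_condExp_le_half hVU hU hB hB0
      refine ⟨B', hB'B.trans hBA, hB', hB'0, ?_⟩
      filter_upwards [hBle, hB'le] with x h h'
      rw [pow_succ]
      linarith
  obtain ⟨n, hn⟩ := exists_pow_lt_of_lt_one hε (by norm_num : (1 / 2 : ℝ) < 1)
  obtain ⟨B, hBA, hB, hB0, hBle⟩ := hpow n
  exact ⟨B, hBA, hB, hB0, hBle.trans (.of_forall fun _ => hn.le)⟩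

theorem exists_subset_condExp_le_of_not_ae_le_zero (hUV : AtomlessOver μ U V) (hVU : V ≤ U)
    (hU : U ≤ mX) (hA : MeasurableSet[U] A) {f : X → ℝ} (hf : StronglyMeasurable[V] f)
    (hfi : Integrable f μ) (hf0 : 0 ≤ᵐ[μ] f) (hfA : f ≤ᵐ[μ] μ[A.indicator (1 : X → ℝ)|V])
    (hf_ne : ¬ f ≤ᵐ[μ] 0) :
    ∃ P ⊆ A, MeasurableSet[U] P ∧ 0 < μ P ∧ μ[P.indicator (1 : X → ℝ)|V] ≤ᵐ[μ] f := by
  have hV : V ≤ mX := hVU.trans hU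
  obtain ⟨ε, hε, hD0⟩ := exists_pos_measure_le_of_not_ae_le_zero hf_ne
  set D := {x | ε ≤ f x}
  have hD : MeasurableSet[V] D := measurableSet_le measurable_const hf.measurable
  have hAD0 : 0 < μ (A ∩ D) := by
    have hmass : ε * μ.real D ≤ μ.real (A ∩ D) := calc
      ε * μ.real D = ∫ _ in D, ε ∂μ := by rw [setIntegral_const, smul_eq_mul, mul_comm]
      _ ≤ ∫ x in D, f x ∂μ :=
        setIntegral_mono_on (integrableOn_const (measure_ne_top μ D)) hfi.integrableOn
          (hV _ hD) fun x hx => hx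
      _ ≤ ∫ x in D, μ[A.indicator (1 : X → ℝ)|V] x ∂μ :=
        setIntegral_mono_ae hfi.integrableOn integrable_condExp.integrableOn hfA
      _ = μ.real (A ∩ D) := setIntegral_condExp_indicator_one hV (hU _ hA) hD
    have : 0 < μ.real (A ∩ D) :=
      (mul_pos hε (ENNReal.toReal_pos hD0.ne' (measure_ne_top μ D))).trans_le hmass
    exact (ENNReal.toReal_pos_iff.1 this).1
  obtain ⟨P, hPAD, hP, hP0, hPε⟩ :=
    hUV.exists_subset_condExp_le hVU hU (hA.inter (hVU _ hD)) hAD0 hε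
  refine ⟨P, hPAD.trans inter_subset_left, hP, hP0, ?_⟩
  have hPD : P ∩ D = P := inter_eq_left.2 (hPAD.trans inter_subset_right)
  filter_upwards [hPD ▸ condExp_indicator_one_inter (μ := μ) (hU _ hP) hD, hPε, hf0]
    with x hsupp hxε hx0
  rw [hsupp]
  by_cases hx : x ∈ D
  · rw [indicator_of_mem hx]
    exact hxε.trans hx
  · rw [indicator_of_notMem hx]
    exact hx0

theorem exists_subset_condExp_eq (hUV : AtomlessOver μ U V) (hVU : V ≤ U) (hU : U ≤ mX)
    (hA : MeasurableSet[U] A) {f : X → ℝ} (hf : StronglyMeasurable[V] f) (hfi : Integrable f μ)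
    (hf0 : 0 ≤ᵐ[μ] f) (hfA : f ≤ᵐ[μ] μ[A.indicator (1 : X → ℝ)|V]) :
    ∃ B ⊆ A, MeasurableSet[U] B ∧ μ[B.indicator (1 : X → ℝ)|V] =ᵐ[μ] f := by
  have hV : V ≤ mX := hVU.trans hU
  obtain ⟨B, ⟨hB, hBA, hBf⟩, hmax⟩ := exists_maximal_up_to_null (μ := μ) hU
    (p := fun B => MeasurableSet[U] B ∧ B ⊆ A ∧ μ[B.indicator (1 : X → ℝ)|V] ≤ᵐ[μ] f)
    (fun _ hB => hB.1)
    ⟨@MeasurableSet.empty X U, empty_subset A, by rw [indicator_empty', condExp_zero]; exact hf0⟩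
    (fun B hBmono hB => ⟨.iUnion fun n => (hB n).1, iUnion_subset fun n => (hB n).2.1,
      condExp_indicator_one_iUnion_le hV (fun n => hU _ (hB n).1) hBmono hf hfi
        fun n => (hB n).2.2⟩)
    (fun B B' hBB' hB ⟨hB', hB'A, hB'f⟩ => ⟨hB, hBB'.trans hB'A,
      (condExp_indicator_one_mono (hU _ hB) (hU _ hB') hBB').trans hB'f⟩)
  refine ⟨B, hBA, hB, ?_⟩
  -- Otherwise the gap `f - μ[1_B|V]` lets `B` grow by a non-null set, against maximality.
  by_contra hne
  have hgap : ¬ f - μ[B.indicator (1 : X → ℝ)|V] ≤ᵐ[μ] 0 := fun h => hne <| by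
    filter_upwards [h, hBf] with x h1 h2
    simp only [Pi.sub_apply, Pi.zero_apply] at h1
    linarith
  obtain ⟨P, hPAB, hP, hP0, hPf⟩ := hUV.exists_subset_condExp_le_of_not_ae_le_zero hVU hU
    (hA.diff hB) (hf.sub stronglyMeasurable_condExp) (hfi.sub integrable_condExp)
    (by filter_upwards [hBf] with x hx; simpa using hx)
    (by
      filter_upwards [hfA, condExp_indicator_one_diff (V := V) (μ := μ) (hU _ hB) (hU _ hA) hBA]
        with x h1 h2
      simp only [h2, Pi.sub_apply]
      linarith)
    hgap
  have hBP : Disjoint B P := disjoint_of_subset_right hPAB disjoint_sdiff_right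
  have hnull := hmax (B ∪ P) subset_union_left ⟨hB.union hP,
    union_subset hBA (hPAB.trans sdiff_subset), by
      filter_upwards [condExp_indicator_one_union (V := V) (μ := μ) (hU _ hB) (hU _ hP) hBP, hPf]
        with x h1 h2
      simp only [h1, Pi.add_apply, Pi.sub_apply] at h2 ⊢
      linarith⟩
  rw [union_sdiff_left, hBP.symm.sdiff_eq_left] at hnull
  exact hP0.ne' hnull

theorem exists_between_condExp_eq (hUV : AtomlessOver μ U V) (hVU : V ≤ U) (hU : U ≤ mX)
    {S T : Set X} (hS : MeasurableSet[U] S) (hT : MeasurableSet[U] T) (hST : S ⊆ T)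
    {s t u : ℝ} (hs : μ[S.indicator (1 : X → ℝ)|V] =ᵐ[μ] fun _ => s)
    (hu : μ[T.indicator (1 : X → ℝ)|V] =ᵐ[μ] fun _ => u) (hst : s ≤ t) (htu : t ≤ u) :
    ∃ R, MeasurableSet[U] R ∧ S ⊆ R ∧ R ⊆ T ∧
      μ[R.indicator (1 : X → ℝ)|V] =ᵐ[μ] fun _ => t := by
  have hTS := condExp_indicator_one_diff (V := V) (μ := μ) (hU _ hS) (hU _ hT) hST
  obtain ⟨B, hBTS, hB, hBt⟩ := hUV.exists_subset_condExp_eq hVU hU (hT.diff hS)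
    (f := fun _ => t - s) stronglyMeasurable_const (integrable_const _)
    (.of_forall fun _ => sub_nonneg.2 hst)
    (by
      filter_upwards [hTS, hs, hu] with x h1 h2 h3
      rw [h1, Pi.sub_apply, h2, h3]
      linarith)
  refine ⟨S ∪ B, hS.union hB, subset_union_left, union_subset hST (hBTS.trans sdiff_subset), ?_⟩
  filter_upwards [condExp_indicator_one_union (V := V) (μ := μ) (hU _ hS) (hU _ hB)
    (disjoint_of_subset_right hBTS disjoint_sdiff_right), hs, hBt] with x h1 h2 h3
  rw [h1, Pi.add_apply, h2, h3]
  ring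

end AtomlessOver

theorem eq_of_forall_floor_div_two_pow_le {a t : ℝ} (ht : 0 ≤ t)
    (h : ∀ n : ℕ, ⌊t * 2 ^ n⌋₊ / 2 ^ n ≤ a ∧ a ≤ (⌊t * 2 ^ n⌋₊ + 1) / 2 ^ n) : a = t := by
  refine eq_of_forall_dist_le fun ε hε => ?_
  obtain ⟨n, hn⟩ := exists_pow_lt_of_lt_one hε (by norm_num : (1 / 2 : ℝ) < 1)
  have h2n : (0 : ℝ) < 2 ^ n := by positivity
  have hfloor : (⌊t * 2 ^ n⌋₊ : ℝ) ≤ t * 2 ^ n := Nat.floor_le (by positivity)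
  have hceil : t * 2 ^ n < ⌊t * 2 ^ n⌋₊ + 1 := Nat.lt_floor_add_one _
  obtain ⟨hlow, hup⟩ := h n
  rw [div_le_iff₀ h2n] at hlow
  rw [le_div_iff₀ h2n] at hup
  have : |a - t| * 2 ^ n ≤ 1 := by
    rw [← abs_of_pos h2n, ← abs_mul, abs_le]
    constructor <;> nlinarith
  rw [Real.dist_eq]
  calc |a - t| ≤ 1 / 2 ^ n := by rwa [le_div_iff₀ h2n]
    _ = (1 / 2) ^ n := by rw [one_div_pow]
    _ ≤ ε := hn.le

section DyadicTower

variable {X : Type*} {U V mX : MeasurableSpace X} {μ : Measure X}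

structure IsDyadicLevel (μ : Measure X) (U V : MeasurableSpace X) (n : ℕ) (S : ℕ → Set X) :
    Prop where
  measurableSet : ∀ k, MeasurableSet[U] (S k)
  mono : Monotone S
  eq_univ : ∀ k, 2 ^ n ≤ k → S k = univ
  condExp_eq : ∀ k ≤ 2 ^ n, μ[(S k).indicator (1 : X → ℝ)|V] =ᵐ[μ] fun _ => (k : ℝ) / 2 ^ n

theorem isDyadicLevel_zero [IsFiniteMeasure μ] (hV : V ≤ mX) :
    IsDyadicLevel μ U V 0 fun k => if k = 0 then ∅ else univ where
  measurableSet k := by split_ifs <;> simp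
  mono := monotone_nat_of_le_succ fun k => by
    rw [if_neg k.succ_ne_zero]
    exact subset_univ _
  eq_univ k hk := if_neg (by omega)
  condExp_eq k hk := by
    rcases Nat.le_one_iff_eq_zero_or_eq_one.1 hk with rfl | rfl
    · simp
    · rw [if_neg one_ne_zero, condExp_univ_indicator_one hV]
      simp

namespace IsDyadicLevel

variable {n : ℕ} {S : ℕ → Set X}

theorem condExp_le [IsFiniteMeasure μ] (hS : IsDyadicLevel μ U V n S) (hV : V ≤ mX) (k : ℕ) :
    μ[(S k).indicator (1 : X → ℝ)|V] ≤ᵐ[μ] fun _ => (k : ℝ) / 2 ^ n := by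
  rcases le_or_gt k (2 ^ n) with hk | hk
  · exact (hS.condExp_eq k hk).le
  · rw [hS.eq_univ k hk.le, condExp_univ_indicator_one hV]
    refine .of_forall fun _ => (one_le_div (by positivity)).2 ?_
    exact_mod_cast hk.le

theorem exists_refinement [IsFiniteMeasure μ] (hS : IsDyadicLevel μ U V n S)
    (hUV : AtomlessOver μ U V) (hVU : V ≤ U) (hU : U ≤ mX) :
    ∃ S', IsDyadicLevel μ U V (n + 1) S' ∧ ∀ k, S' (2 * k) = S k := by
  have hmid : ∀ k, ∃ R, MeasurableSet[U] R ∧ S k ⊆ R ∧ R ⊆ S (k + 1) ∧ (k < 2 ^ n →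
      μ[R.indicator (1 : X → ℝ)|V] =ᵐ[μ] fun _ => ((2 * k + 1 : ℕ) : ℝ) / 2 ^ (n + 1)) := by
    intro k
    by_cases hk : k < 2 ^ n
    · obtain ⟨R, hR, hSR, hRS, hRt⟩ := hUV.exists_between_condExp_eq hVU hU
        (hS.measurableSet k) (hS.measurableSet (k + 1)) (hS.mono k.le_succ)
        (hS.condExp_eq k hk.le) (hS.condExp_eq (k + 1) hk)
        (t := ((2 * k + 1 : ℕ) : ℝ) / 2 ^ (n + 1))
        (by rw [pow_succ]; field_simp; push_cast; linarith)
        (by rw [pow_succ]; field_simp; push_cast; linarith)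
      exact ⟨R, hR, hSR, hRS, fun _ => hRt⟩
    · refine ⟨univ, .univ, subset_univ _, ?_, fun h => absurd h hk⟩
      rw [hS.eq_univ (k + 1) (by omega)]
  choose M hM hSM hMS hMt using hmid
  set S' : ℕ → Set X := fun j => if Even j then S (j / 2) else M (j / 2)
  have heven : ∀ k, S' (2 * k) = S k := fun k => by simp [S']
  have hodd : ∀ k, S' (2 * k + 1) = M k := fun k => by
    simp [S', show (2 * k + 1) / 2 = k by omega]
  refine ⟨S', ⟨fun j => ?_, monotone_nat_of_le_succ fun j => ?_, fun j hj => ?_,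
    fun j hj => ?_⟩, heven⟩ <;> rcases Nat.even_or_odd' j with ⟨k, rfl | rfl⟩
  · exact heven k ▸ hS.measurableSet k
  · exact hodd k ▸ hM k
  · rw [heven, hodd]
    exact hSM k
  · rw [hodd, show 2 * k + 1 + 1 = 2 * (k + 1) by ring, heven]
    exact hMS k
  · rw [heven]
    exact hS.eq_univ k (by rw [pow_succ] at hj; omega)
  · rw [hodd]
    exact eq_univ_of_univ_subset (hS.eq_univ k (by rw [pow_succ] at hj; omega) ▸ hSM k)
  · rw [heven]
    refine (hS.condExp_eq k (by rw [pow_succ] at hj; omega)).trans (.of_forall fun _ => ?_)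
    simp only [pow_succ]
    field_simp
    push_cast
    ring
  · rw [hodd]
    exact hMt k (by rw [pow_succ] at hj; omega)

end IsDyadicLevel

structure IsDyadicTower (μ : Measure X) (U V : MeasurableSpace X) (S : ℕ → ℕ → Set X) :
    Prop where
  level : ∀ n, IsDyadicLevel μ U V n (S n)
  refine : ∀ n k, S (n + 1) (2 * k) = S n k

theorem exists_isDyadicTower [IsFiniteMeasure μ] (hUV : AtomlessOver μ U V) (hVU : V ≤ U)
    (hU : U ≤ mX) : ∃ S, IsDyadicTower μ U V S := by
  choose! next hnext hnext_even using
    fun n (S : ℕ → Set X) (hS : IsDyadicLevel μ U V n S) => hS.exists_refinement hUV hVU hU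
  let S : ℕ → ℕ → Set X := fun n =>
    Nat.rec (motive := fun _ => ℕ → Set X) (fun k => if k = 0 then ∅ else univ) next n
  have hlevel : ∀ n, IsDyadicLevel μ U V n (S n) := fun n => by
    induction n with
    | zero => exact isDyadicLevel_zero (hVU.trans hU)
    | succ n ih => exact hnext n _ ih
  exact ⟨S, ⟨hlevel, fun n => hnext_even n _ (hlevel n)⟩⟩

noncomputable def dyadicInf (S : ℕ → ℕ → Set X) (x : X) : ℝ :=
  ⨅ p : {p : ℕ × ℕ // x ∈ S p.1 p.2}, (p.1.2 : ℝ) / 2 ^ p.1.1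

theorem dyadicInf_nonneg (S : ℕ → ℕ → Set X) (x : X) : 0 ≤ dyadicInf S x :=
  Real.iInf_nonneg fun _ => by positivity

theorem dyadicInf_le {S : ℕ → ℕ → Set X} {x : X} {n k : ℕ} (hx : x ∈ S n k) :
    dyadicInf S x ≤ k / 2 ^ n :=
  ciInf_le ⟨0, by rintro _ ⟨p, rfl⟩; positivity⟩ (⟨(n, k), hx⟩ : {p : ℕ × ℕ // x ∈ S p.1 p.2})

namespace IsDyadicTower

variable {S : ℕ → ℕ → Set X}

theorem eq_mul_two_pow (hS : IsDyadicTower μ U V S) (n k d : ℕ) :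
    S (n + d) (k * 2 ^ d) = S n k := by
  induction d with
  | zero => simp
  | succ d ih =>
    rw [← add_assoc, show k * 2 ^ (d + 1) = 2 * (k * 2 ^ d) by ring, hS.refine, ih]

theorem subset_of_div_le (hS : IsDyadicTower μ U V S) {m j n k : ℕ}
    (h : (j : ℝ) / 2 ^ m ≤ k / 2 ^ n) : S m j ⊆ S n k := by
  rw [← hS.eq_mul_two_pow m j n, ← hS.eq_mul_two_pow n k m, add_comm n m]
  refine (hS.level (m + n)).mono ?_
  rw [div_le_div_iff₀ (by positivity) (by positivity)] at h
  exact_mod_cast h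

theorem mem_zero_one (hS : IsDyadicTower μ U V S) (x : X) : x ∈ S 0 1 := by
  rw [(hS.level 0).eq_univ 1 le_rfl]
  trivial

theorem exists_mem_of_dyadicInf_lt (hS : IsDyadicTower μ U V S) {x : X} {r : ℝ}
    (h : dyadicInf S x < r) : ∃ n k, x ∈ S n k ∧ (k : ℝ) / 2 ^ n < r := by
  have : Nonempty {p : ℕ × ℕ // x ∈ S p.1 p.2} := ⟨⟨(0, 1), hS.mem_zero_one x⟩⟩
  obtain ⟨⟨⟨n, k⟩, hx⟩, hlt⟩ := exists_lt_of_ciInf_lt h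
  exact ⟨n, k, hx, hlt⟩

theorem mem_of_dyadicInf_lt (hS : IsDyadicTower μ U V S) {x : X} {n k : ℕ}
    (h : dyadicInf S x < k / 2 ^ n) : x ∈ S n k := by
  obtain ⟨m, j, hx, hlt⟩ := hS.exists_mem_of_dyadicInf_lt h
  exact hS.subset_of_div_le hlt.le hx

theorem dyadicInf_le_one (hS : IsDyadicTower μ U V S) (x : X) : dyadicInf S x ≤ 1 := by
  simpa using dyadicInf_le (hS.mem_zero_one x)

theorem measurable_dyadicInf (hS : IsDyadicTower μ U V S) : Measurable[U] (dyadicInf S) := by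
  refine measurable_of_Iio fun r => ?_
  have hIio : dyadicInf S ⁻¹' Iio r = ⋃ (n : ℕ) (k : ℕ) (_ : (k : ℝ) / 2 ^ n < r), S n k := by
    ext x
    simp only [mem_preimage, mem_Iio, mem_iUnion, exists_prop]
    exact ⟨fun h => let ⟨n, k, hx, hlt⟩ := hS.exists_mem_of_dyadicInf_lt h; ⟨n, k, hlt, hx⟩,
      fun ⟨n, k, hlt, hx⟩ => (dyadicInf_le hx).trans_lt hlt⟩
  rw [hIio]
  exact .iUnion fun n => .iUnion fun k => .iUnion fun _ => (hS.level n).measurableSet k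

theorem condExp_indicator_setOf_dyadicInf_le [IsFiniteMeasure μ] (hS : IsDyadicTower μ U V S)
    (hVU : V ≤ U) (hU : U ≤ mX) {t : ℝ} (ht : t ∈ Icc (0 : ℝ) 1) :
    μ[{x | dyadicInf S x ≤ t}.indicator (1 : X → ℝ)|V] =ᵐ[μ] fun _ => t := by
  set T := {x | dyadicInf S x ≤ t}
  have hmeas : ∀ n k, MeasurableSet (S n k) := fun n k => hU _ ((hS.level n).measurableSet k)
  have hT : MeasurableSet T := hU _ (hS.measurable_dyadicInf measurableSet_Iic)
  have hbounds : ∀ n : ℕ, ∀ᵐ x ∂μ, ⌊t * 2 ^ n⌋₊ / 2 ^ n ≤ μ[T.indicator (1 : X → ℝ)|V] x ∧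
      μ[T.indicator (1 : X → ℝ)|V] x ≤ (⌊t * 2 ^ n⌋₊ + 1) / 2 ^ n := by
    intro n
    set k := ⌊t * 2 ^ n⌋₊
    have h2n : (0 : ℝ) < 2 ^ n := by positivity
    have hk : (k : ℝ) / 2 ^ n ≤ t := (div_le_iff₀ h2n).2 (Nat.floor_le (by positivity [ht.1]))
    have hk1 : t < ((k + 1 : ℕ) : ℝ) / 2 ^ n := by
      rw [lt_div_iff₀ h2n]
      push_cast
      exact Nat.lt_floor_add_one _
    have hk2 : k ≤ 2 ^ n := Nat.floor_le_of_le (by push_cast; nlinarith [ht.2])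
    have hlow : S n k ⊆ T := fun x hx => (dyadicInf_le hx).trans hk
    have hup : T ⊆ S n (k + 1) := fun x hx =>
      hS.mem_of_dyadicInf_lt ((show dyadicInf S x ≤ t from hx).trans_lt hk1)
    filter_upwards [(hS.level n).condExp_eq k hk2, (hS.level n).condExp_le (hVU.trans hU) (k + 1),
      condExp_indicator_one_mono (V := V) (μ := μ) (hmeas n k) hT hlow,
      condExp_indicator_one_mono (V := V) (μ := μ) hT (hmeas n (k + 1)) hup] with x h1 h2 h3 h4
    push_cast at h2
    exact ⟨h1 ▸ h3, h4.trans h2⟩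
  filter_upwards [ae_all_iff.2 hbounds] with x hx
  exact eq_of_forall_floor_div_two_pow_le ht.1 hx

end IsDyadicTower

end DyadicTower

/-- If `U` is atomless over `V`, there is a `U`-measurable function `h` with
values in `[0,1]` that is conditionally uniformly distributed over `V`: for every `t ∈ [0,1]`,
`μ[χ_{h ≤ t} | V] = t` a.e. -/
theorem exists_cond_uniform_of_atomlessOver
    {X : Type*} {mX : MeasurableSpace X} (μ : Measure X) [IsFiniteMeasure μ]
    (U V : MeasurableSpace X) (hVU : V ≤ U) (hU : U ≤ mX)
    (hUV : AtomlessOver μ U V) :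
    ∃ h : X → ℝ, Measurable[U] h ∧ (∀ x, h x ∈ Set.Icc (0 : ℝ) 1) ∧
      ∀ t ∈ Set.Icc (0 : ℝ) 1,
        μ[Set.indicator {x | h x ≤ t} (fun _ => (1 : ℝ)) | V] =ᵐ[μ] fun _ => t := by
  obtain ⟨S, hS⟩ := exists_isDyadicTower hUV hVU hU
  exact ⟨dyadicInf S, hS.measurable_dyadicInf,
    fun x => ⟨dyadicInf_nonneg S x, hS.dyadicInf_le_one x⟩,
    fun t ht => hS.condExp_indicator_setOf_dyadicInf_le hVU hU ht⟩
end

section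
/- Fix 1 ≤ p < ∞. Let (X, 𝒜, μ) be a probability space and let A, B, C ⊆ 𝒜 be sub-σ-algebras with C ⊆ B. If μ[f|B] = μ[f|C] a.e. for every f ∈ Lp(μ) that is a.e. equal to an A-measurable function, then μ[f|B] = μ[f|C] a.e. for every f ∈ Lp(μ) that is a.e. equal to a function measurable with respect to the σ-algebra generated by A ∪ C. -/
/-!
The functions `f` with `μ[f | B] =ᵐ[μ] μ[f | C]` form a linear space `𝓗` that is closed in every
`Lᵖ`, `p ≥ 1`, since conditional expectations are `Lᵖ` contractions. Because `C ≤ B`, a bounded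
`C`-measurable factor can be pulled out of both conditional expectations, so `𝓗` contains the
indicators of the sets `a ∩ c` with `a ∈ A`, `c ∈ C`. These sets form a π-system generating
`A ⊔ C`, and the sets whose indicator lies in `𝓗` form a Dynkin system, so `𝓗` contains every
`A ⊔ C`-measurable indicator, hence every `A ⊔ C`-measurable `Lᵖ` function.
-/

open MeasureTheory ENNReal Filter Function Set Topology

section

-- `mX` is declared last so that it is the default `MeasurableSpace` instance.
variable {X : Type*} {A B C : MeasurableSpace X} {mX : MeasurableSpace X} {μ : Measure X}
  {f g : X → ℝ}

theorem integrable_indicator_one_s4 [IsFiniteMeasure μ] {s : Set X} (hs : MeasurableSet s) :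
    Integrable (s.indicator (1 : X → ℝ)) μ :=
  (integrable_const 1).indicator hs

theorem MeasurableSet.accumulate {s : ℕ → Set X} (hs : ∀ n, MeasurableSet (s n)) (n : ℕ) :
    MeasurableSet (accumulate s n) :=
  .biUnion (to_countable _) fun i _ ↦ hs i

theorem isPiSystem_image2_inter (A C : MeasurableSpace X) :
    IsPiSystem (image2 (· ∩ ·) {a | MeasurableSet[A] a} {c | MeasurableSet[C] c}) := by
  rintro _ ⟨a₁, ha₁, c₁, hc₁, rfl⟩ _ ⟨a₂, ha₂, c₂, hc₂, rfl⟩ -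
  exact ⟨a₁ ∩ a₂, ha₁.inter ha₂, c₁ ∩ c₂, hc₁.inter hc₂, inter_inter_inter_comm ..⟩

theorem sup_eq_generateFrom_image2_inter (A C : MeasurableSpace X) :
    A ⊔ C = .generateFrom (image2 (· ∩ ·) {a | MeasurableSet[A] a} {c | MeasurableSet[C] c}) := by
  refine le_antisymm (sup_le ?_ ?_) (MeasurableSpace.generateFrom_le ?_)
  · exact fun a ha ↦ .basic _ ⟨a, ha, univ, .univ, inter_univ a⟩
  · exact fun c hc ↦ .basic _ ⟨univ, .univ, c, hc, univ_inter c⟩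
  · rintro _ ⟨a, ha, c, hc, rfl⟩
    exact (le_sup_left (a := A) _ ha).inter (le_sup_right (b := C) _ hc)

theorem tendsto_eLpNorm_indicator_accumulate_sub_iUnion [IsFiniteMeasure μ] {s : ℕ → Set X}
    (hs : ∀ n, MeasurableSet (s n)) :
    Tendsto (fun n ↦ eLpNorm
      ((accumulate s n).indicator 1 - (⋃ i, s i).indicator (1 : X → ℝ)) 1 μ) atTop (𝓝 0) := by
  have hnorm (n : ℕ) :
      eLpNorm ((accumulate s n).indicator 1 - (⋃ i, s i).indicator (1 : X → ℝ)) 1 μ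
        = μ (⋃ i, s i) - μ (accumulate s n) := by
    have hsub : accumulate s n ⊆ ⋃ i, s i := accumulate_subset_iUnion n
    have hacc := MeasurableSet.accumulate hs n
    rw [eLpNorm_sub_comm, ← indicator_sdiff hsub, Pi.one_def,
      eLpNorm_indicator_const ((MeasurableSet.iUnion hs).diff hacc) one_ne_zero one_ne_top,
      measure_sdiff hsub hacc.nullMeasurableSet (measure_ne_top μ _)]
    simp
  simp_rw [hnorm]
  rw [← tsub_self (μ (⋃ i, s i))]
  exact ENNReal.Tendsto.sub tendsto_const_nhds tendsto_measure_iUnion_accumulate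
    (Or.inl (measure_ne_top μ _))

def CondExpAgree (μ : Measure X) (B C : MeasurableSpace X) (f : X → ℝ) : Prop :=
  μ[f | B] =ᵐ[μ] μ[f | C]

theorem condExpAgree_one [IsFiniteMeasure μ] (hB : B ≤ mX) (hC : C ≤ mX) :
    CondExpAgree μ B C 1 := by
  rw [CondExpAgree, Pi.one_def, condExp_const hB, condExp_const hC]

namespace CondExpAgree

theorem congr (h : CondExpAgree μ B C f) (hfg : f =ᵐ[μ] g) : CondExpAgree μ B C g :=
  (condExp_congr_ae hfg).symm.trans (h.trans (condExp_congr_ae hfg))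

theorem add (hf : Integrable f μ) (hg : Integrable g μ) (h₁ : CondExpAgree μ B C f)
    (h₂ : CondExpAgree μ B C g) : CondExpAgree μ B C (f + g) :=
  (condExp_add hf hg B).trans ((EventuallyEq.add h₁ h₂).trans (condExp_add hf hg C).symm)

theorem sub (hf : Integrable f μ) (hg : Integrable g μ) (h₁ : CondExpAgree μ B C f)
    (h₂ : CondExpAgree μ B C g) : CondExpAgree μ B C (f - g) :=
  (condExp_sub hf hg B).trans ((EventuallyEq.sub h₁ h₂).trans (condExp_sub hf hg C).symm)

theorem const_smul (c : ℝ) (h : CondExpAgree μ B C f) : CondExpAgree μ B C (c • f) :=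
  (condExp_smul c f B).trans ((EventuallyEq.const_smul h c).trans (condExp_smul c f C).symm)

theorem mul_left (hCB : C ≤ B) {c : X → ℝ} (hc : StronglyMeasurable[C] c)
    (hcg : Integrable (c * g) μ) (hg : Integrable g μ) (h : CondExpAgree μ B C g) :
    CondExpAgree μ B C (c * g) :=
  (condExp_mul_of_stronglyMeasurable_left (hc.mono hCB) hcg hg).trans
    ((EventuallyEq.mul EventuallyEq.rfl h).trans
      (condExp_mul_of_stronglyMeasurable_left hc hcg hg).symm)

theorem eLpNorm_condExp_sub_condExp_le {p : ℝ≥0∞} (hp : 1 ≤ p) (hf : Integrable f μ) (hg : Integrable g μ)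
    (h : CondExpAgree μ B C g) :
    eLpNorm (μ[f | B] - μ[f | C]) p μ ≤ 2 * eLpNorm (g - f) p μ := by
  have hsplit : μ[f | B] - μ[f | C] =ᵐ[μ] μ[f - g | B] - μ[f - g | C] := by
    filter_upwards [condExp_sub hf hg B, condExp_sub hf hg C, h] with x hB hC hg
    simp only [Pi.sub_apply, hB, hC, hg]
    ring
  calc eLpNorm (μ[f | B] - μ[f | C]) p μ
      = eLpNorm (μ[f - g | B] - μ[f - g | C]) p μ := eLpNorm_congr_ae hsplit
    _ ≤ eLpNorm (μ[f - g | B]) p μ + eLpNorm (μ[f - g | C]) p μ :=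
        eLpNorm_sub_le integrable_condExp.1 integrable_condExp.1 hp
    _ ≤ eLpNorm (f - g) p μ + eLpNorm (f - g) p μ :=
        add_le_add (eLpNorm_condExp_le_eLpNorm _ hp) (eLpNorm_condExp_le_eLpNorm _ hp)
    _ = 2 * eLpNorm (g - f) p μ := by rw [two_mul, eLpNorm_sub_comm]

theorem of_tendsto {p : ℝ≥0∞} (hp : 1 ≤ p) {φ : ℕ → X → ℝ} (hf : Integrable f μ)
    (hφ : ∀ n, Integrable (φ n) μ) (h : ∀ n, CondExpAgree μ B C (φ n))
    (hlim : Tendsto (fun n ↦ eLpNorm (φ n - f) p μ) atTop (𝓝 0)) : CondExpAgree μ B C f := by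
  have hbound : Tendsto (fun n ↦ 2 * eLpNorm (φ n - f) p μ) atTop (𝓝 0) := by
    simpa using ENNReal.Tendsto.const_mul hlim (Or.inr ofNat_ne_top)
  have hzero : eLpNorm (μ[f | B] - μ[f | C]) p μ = 0 :=
    le_antisymm (ge_of_tendsto' hbound fun n ↦ (h n).eLpNorm_condExp_sub_condExp_le hp hf (hφ n)) bot_le
  rw [eLpNorm_eq_zero_iff (integrable_condExp.sub integrable_condExp).1
    (zero_lt_one.trans_le hp).ne'] at hzero
  exact hzero.mono fun x hx ↦ sub_eq_zero.mp hx

section FiniteMeasure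

variable [IsFiniteMeasure μ]

theorem indicator_compl (hB : B ≤ mX) (hC : C ≤ mX) {s : Set X} (hs : MeasurableSet s)
    (h : CondExpAgree μ B C (s.indicator 1)) : CondExpAgree μ B C (sᶜ.indicator 1) := by
  rw [Set.indicator_compl]
  exact (condExpAgree_one hB hC).sub (integrable_const 1) (integrable_indicator_one_s4 hs) h

theorem indicator_iUnion {s : ℕ → Set X} (hs : ∀ n, MeasurableSet (s n))
    (hd : Pairwise (Disjoint on s)) (h : ∀ n, CondExpAgree μ B C ((s n).indicator 1)) :
    CondExpAgree μ B C ((⋃ n, s n).indicator 1) := by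
  have hacc (n : ℕ) : CondExpAgree μ B C ((accumulate s n).indicator 1) := by
    induction n with
    | zero => rw [accumulate_zero_nat]; exact h 0
    | succ n ih =>
      rw [accumulate_succ, indicator_union_of_disjoint (disjoint_accumulate hd n.lt_succ_self)]
      exact ih.add (integrable_indicator_one_s4 (.accumulate hs n))
        (integrable_indicator_one_s4 (hs _)) (h (n + 1))
  exact of_tendsto le_rfl (integrable_indicator_one_s4 (MeasurableSet.iUnion hs))
    (fun n ↦ integrable_indicator_one_s4 (MeasurableSet.accumulate hs _))
    hacc (tendsto_eLpNorm_indicator_accumulate_sub_iUnion hs)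

end FiniteMeasure

end CondExpAgree

theorem isClosed_setOf_condExpAgree [IsFiniteMeasure μ] {p : ℝ≥0∞} [Fact (1 ≤ p)] :
    IsClosed {f : Lp ℝ p μ | CondExpAgree μ B C f} := by
  refine IsSeqClosed.isClosed fun φ f hφ hlim ↦ ?_
  have hp : 1 ≤ p := Fact.out
  exact CondExpAgree.of_tendsto hp ((Lp.memLp f).integrable hp)
    (fun n ↦ (Lp.memLp (φ n)).integrable hp) hφ
    ((Lp.tendsto_Lp_iff_tendsto_eLpNorm' _ _).mp hlim)

theorem condExpAgree_indicator_of_measurableSet_sup [IsFiniteMeasure μ] (hA : A ≤ mX)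
    (hB : B ≤ mX) (hCB : C ≤ B) (h : ∀ a, MeasurableSet[A] a → CondExpAgree μ B C (a.indicator 1))
    {s : Set X} (hs : MeasurableSet[A ⊔ C] s) : CondExpAgree μ B C (s.indicator 1) := by
  have hC : C ≤ mX := hCB.trans hB
  have hAC : A ⊔ C ≤ mX := sup_le hA hC
  induction s, hs using MeasurableSpace.induction_on_inter (sup_eq_generateFrom_image2_inter A C)
    (isPiSystem_image2_inter A C) with
  | empty => simp [CondExpAgree]
  | basic t ht =>
    obtain ⟨a, ha, c, hc, rfl⟩ := ht
    change CondExpAgree μ B C ((a ∩ c).indicator 1)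
    rw [inter_comm, inter_indicator_one]
    exact (h a ha).mul_left hCB (stronglyMeasurable_one.indicator hc)
      (inter_indicator_one (M₀ := ℝ) ▸ integrable_indicator_one_s4 ((hC c hc).inter (hA a ha)))
      (integrable_indicator_one_s4 (hA a ha))
  | compl t ht h => exact h.indicator_compl hB hC (hAC t ht)
  | iUnion s hd hs h => exact CondExpAgree.indicator_iUnion (fun n ↦ hAC _ (hs n)) hd h

end

/-- If the conditional expectations over `B` and over `C ⊆ B` agree on every
`Lp` function that is a.e. `A`-measurable, then they agree on every `Lp` function that is a.e.
measurable with respect to the σ-algebra generated by `A ∪ C` (i.e. `A ⊔ C`). -/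
theorem condexp_eq_of_generated_sup
    {X : Type*} {mX : MeasurableSpace X} (μ : Measure X) [IsProbabilityMeasure μ]
    (p : ℝ≥0∞) (hp : 1 ≤ p) (hp' : p ≠ ⊤)
    (A B C : MeasurableSpace X) (hA : A ≤ mX) (hB : B ≤ mX) (hCB : C ≤ B)
    (H : ∀ f : X → ℝ, MemLp f p μ → AEStronglyMeasurable[A] f μ →
      μ[f | B] =ᵐ[μ] μ[f | C]) :
    ∀ f : X → ℝ, MemLp f p μ → AEStronglyMeasurable[A ⊔ C] f μ →
      μ[f | B] =ᵐ[μ] μ[f | C] := by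
  have : Fact (1 ≤ p) := ⟨hp⟩
  have hsets (s : Set X) (hs : MeasurableSet[A ⊔ C] s) : CondExpAgree μ B C (s.indicator 1) :=
    condExpAgree_indicator_of_measurableSet_sup hA hB hCB (fun a ha ↦
      H _ (memLp_indicator_const p (hA a ha) 1 (.inr (measure_ne_top μ a)))
        (stronglyMeasurable_one.indicator ha).aestronglyMeasurable) hs
  refine MemLp.induction_stronglyMeasurable (sup_le hA (hCB.trans hB)) hp' (CondExpAgree μ B C)
    ?_ ?_ ?_ ?_
  · intro c s hs _
    exact funext (smul_indicator_one_apply s c) ▸ (hsets s hs).const_smul c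
  · exact fun f g _ hf hg _ _ ↦ CondExpAgree.add (hf.integrable hp) (hg.integrable hp)
  · exact isClosed_setOf_condExpAgree.preimage continuous_subtype_val
  · exact fun f g hfg _ h ↦ h.congr hfg
end

section
/- Fix 1 ≤ p < ∞. Let (X, 𝒜, μ) be a probability space and let V ⊆ W₀ ⊆ 𝒜 and V ⊆ W₁ ⊆ 𝒜 be sub-σ-algebras. Then the following are equivalent: (i) μ[f|W₁] = μ[f|V] a.e. for every f ∈ Lp(μ) that is a.e. equal to a W₀-measurable function; (ii) for every P₀ ∈ W₀ and P₁ ∈ W₁, μ[χ_{P₀ ∩ P₁} | V] = μ[χ_{P₀} | V] · μ[χ_{P₁} | V] a.e. -/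
/-!
For a single set `s`, `μ⟦s | W₁⟧ = μ⟦s | V⟧` holds iff `μ⟦s ∩ t | V⟧ = μ⟦s | V⟧ * μ⟦t | V⟧` for
all `t ∈ W₁`: one direction is the tower property `μ[· | V] = μ[μ[· | W₁] | V]` followed by
pulling the `W₁`-measurable factor `1_t` out of `μ[· | W₁]`; for the other, `μ⟦s | V⟧` has the
set integrals of `1_s` over every `t ∈ W₁`. Both `μ[· | W₁]` and `μ[· | V]` are continuous and
linear on `L¹`, so agreement on indicators of `W₀`-sets extends to every integrable a.e.
`W₀`-measurable function, in particular to every such function in `Lp` for `1 ≤ p`.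
-/

open MeasureTheory ENNReal ProbabilityTheory

section Indicator

variable {X : Type*} {m V W mX : MeasurableSpace X} {μ : Measure X} [IsFiniteMeasure μ]

theorem condExp_indicator_of_aestronglyMeasurable {g : X → ℝ} {s : Set X}
    (hg : AEStronglyMeasurable[m] g μ) (hg_int : Integrable g μ) (hs : MeasurableSet s) :
    μ[s.indicator g | m] =ᵐ[μ] g * μ⟦s | m⟧ := by
  have hmul : s.indicator g = g * s.indicator fun _ => (1 : ℝ) := by
    ext x; by_cases hx : x ∈ s <;> simp [hx]
  rw [hmul]
  exact condExp_mul_of_aestronglyMeasurable_left hg (hmul ▸ hg_int.indicator hs)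
    ((integrable_const (1 : ℝ)).indicator hs)

variable {s t : Set X}

theorem condExp_indicator_inter_ae_eq_mul (hVW : V ≤ W) (hW : W ≤ mX) (hs : MeasurableSet s)
    (ht : MeasurableSet[W] t) (h : μ⟦s | W⟧ =ᵐ[μ] μ⟦s | V⟧) :
    μ⟦s ∩ t | V⟧ =ᵐ[μ] μ⟦s | V⟧ * μ⟦t | V⟧ := by
  have hW_eq : μ⟦s ∩ t | W⟧ =ᵐ[μ] t.indicator (μ⟦s | V⟧) := by
    rw [Set.inter_comm, ← Set.indicator_indicator]
    exact (condExp_indicator ((integrable_const (1 : ℝ)).indicator hs) ht).trans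
      (h.indicator (s := t))
  calc μ⟦s ∩ t | V⟧ =ᵐ[μ] μ[μ⟦s ∩ t | W⟧ | V] := (condExp_condExp_of_le hVW hW).symm
    _ =ᵐ[μ] μ[t.indicator (μ⟦s | V⟧) | V] := condExp_congr_ae hW_eq
    _ =ᵐ[μ] μ⟦s | V⟧ * μ⟦t | V⟧ := condExp_indicator_of_aestronglyMeasurable
        stronglyMeasurable_condExp.aestronglyMeasurable integrable_condExp (hW _ ht)

theorem condExp_indicator_ae_eq_of_forall_inter (hVW : V ≤ W) (hW : W ≤ mX) (hs : MeasurableSet s)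
    (h : ∀ t, MeasurableSet[W] t → μ⟦s ∩ t | V⟧ =ᵐ[μ] μ⟦s | V⟧ * μ⟦t | V⟧) :
    μ⟦s | W⟧ =ᵐ[μ] μ⟦s | V⟧ := by
  have hV : V ≤ mX := hVW.trans hW
  refine (ae_eq_condExp_of_forall_setIntegral_eq hW ((integrable_const (1 : ℝ)).indicator hs)
    (fun _ _ _ => integrable_condExp.integrableOn) (fun t ht _ => ?_)
    (stronglyMeasurable_condExp.aestronglyMeasurable.mono hVW)).symm
  calc ∫ x in t, (μ⟦s | V⟧) x ∂μ = ∫ x, t.indicator (μ⟦s | V⟧) x ∂μ :=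
        (integral_indicator (hW _ ht)).symm
    _ = ∫ x, μ[t.indicator (μ⟦s | V⟧) | V] x ∂μ := (integral_condExp hV).symm
    _ = ∫ x, (μ⟦s | V⟧ * μ⟦t | V⟧) x ∂μ := integral_congr_ae
        (condExp_indicator_of_aestronglyMeasurable
          stronglyMeasurable_condExp.aestronglyMeasurable integrable_condExp (hW _ ht))
    _ = ∫ x, (μ⟦s ∩ t | V⟧) x ∂μ := integral_congr_ae (h t ht).symm
    _ = ∫ x, (s ∩ t).indicator (fun _ => (1 : ℝ)) x ∂μ := integral_condExp hV
    _ = ∫ x in t, s.indicator (fun _ => (1 : ℝ)) x ∂μ := by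
        rw [Set.inter_comm, ← Set.indicator_indicator, integral_indicator (hW _ ht)]

end Indicator

section Extension

variable {X : Type*} {mX : MeasurableSpace X} {μ : Measure X}

theorem isClosed_setOf_condExp_ae_eq {m₁ m₂ : MeasurableSpace X} (hm₁ : m₁ ≤ mX) (hm₂ : m₂ ≤ mX)
    [SigmaFinite (μ.trim hm₁)] [SigmaFinite (μ.trim hm₂)] :
    IsClosed {f : X →₁[μ] ℝ | μ[f | m₁] =ᵐ[μ] μ[f | m₂]} := by
  have hL1 {m : MeasurableSpace X} (hm : m ≤ mX) [SigmaFinite (μ.trim hm)] (f : X →₁[μ] ℝ) :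
      μ[f | m] =ᵐ[μ] condExpL1CLM ℝ hm μ f := by
    simpa only [Integrable.toL1_coeFn] using condExp_ae_eq_condExpL1CLM hm (L1.integrable_coeFn f)
  have hset : {f : X →₁[μ] ℝ | μ[f | m₁] =ᵐ[μ] μ[f | m₂]} =
      {f | condExpL1CLM ℝ hm₁ μ f = condExpL1CLM ℝ hm₂ μ f} := by
    ext f
    simp only [Set.mem_ofPred_eq, Lp.ext_iff]
    exact ⟨fun h => (hL1 hm₁ f).symm.trans (h.trans (hL1 hm₂ f)),
      fun h => (hL1 hm₁ f).trans (h.trans (hL1 hm₂ f).symm)⟩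
  rw [hset]
  exact isClosed_eq (condExpL1CLM ℝ hm₁ μ).continuous (condExpL1CLM ℝ hm₂ μ).continuous

theorem condExp_ae_eq_of_forall_condExp_indicator {m₀ m₁ m₂ : MeasurableSpace X}
    (hm₀ : m₀ ≤ mX) (hm₁ : m₁ ≤ mX) (hm₂ : m₂ ≤ mX)
    [SigmaFinite (μ.trim hm₁)] [SigmaFinite (μ.trim hm₂)]
    (h : ∀ t, MeasurableSet[m₀] t → μ⟦t | m₁⟧ =ᵐ[μ] μ⟦t | m₂⟧)
    {f : X → ℝ} (hf : Integrable f μ) (hfm : AEStronglyMeasurable[m₀] f μ) :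
    μ[f | m₁] =ᵐ[μ] μ[f | m₂] := by
  rw [← memLp_one_iff_integrable] at hf
  refine MemLp.induction_stronglyMeasurable hm₀ one_ne_top (fun f => μ[f | m₁] =ᵐ[μ] μ[f | m₂])
    ?_ ?_ ?_ ?_ hf hfm
  · intro c t ht _
    have hsmul : t.indicator (fun _ => c) = c • t.indicator fun _ => (1 : ℝ) := by
      ext x; by_cases hx : x ∈ t <;> simp [hx]
    rw [hsmul]
    exact (condExp_smul c _ m₁).trans (((h t ht).const_smul c).trans (condExp_smul c _ m₂).symm)
  · intro f g _ hf hg _ _ hfP hgP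
    rw [memLp_one_iff_integrable] at hf hg
    exact (condExp_add hf hg m₁).trans ((hfP.add hgP).trans (condExp_add hf hg m₂).symm)
  · exact (isClosed_setOf_condExp_ae_eq hm₁ hm₂).preimage continuous_subtype_val
  · intro f g hfg _ hfP
    exact (condExp_congr_ae hfg.symm).trans (hfP.trans (condExp_congr_ae hfg))

end Extension

theorem condexp_eq_iff_condexp_inter_mul_general
    {X : Type*} {mX : MeasurableSpace X} (μ : Measure X) [IsProbabilityMeasure μ]
    (p : ℝ≥0∞) (hp : 1 ≤ p)
    (V W₀ W₁ : MeasurableSpace X) (hVW₁ : V ≤ W₁)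
    (hW₀ : W₀ ≤ mX) (hW₁ : W₁ ≤ mX) :
    (∀ f : X → ℝ, MemLp f p μ → AEStronglyMeasurable[W₀] f μ →
        μ[f | W₁] =ᵐ[μ] μ[f | V]) ↔
      (∀ P₀ P₁ : Set X, MeasurableSet[W₀] P₀ → MeasurableSet[W₁] P₁ →
        μ[Set.indicator (P₀ ∩ P₁) (fun _ => (1 : ℝ)) | V]
          =ᵐ[μ] μ[Set.indicator P₀ (fun _ => (1 : ℝ)) | V]
            * μ[Set.indicator P₁ (fun _ => (1 : ℝ)) | V]) := by
  constructor
  · intro h P₀ P₁ hP₀ hP₁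
    refine condExp_indicator_inter_ae_eq_mul hVW₁ hW₁ (hW₀ _ hP₀) hP₁ (h _ ?_ ?_)
    · exact memLp_indicator_const p (hW₀ _ hP₀) 1 (Or.inr (measure_ne_top μ _))
    · exact (stronglyMeasurable_const.indicator hP₀).aestronglyMeasurable
  · intro h f hf hfm
    exact condExp_ae_eq_of_forall_condExp_indicator hW₀ hW₁ (hVW₁.trans hW₁)
      (fun P₀ hP₀ => condExp_indicator_ae_eq_of_forall_inter hVW₁ hW₁ (hW₀ _ hP₀) (h P₀ · hP₀))
      (hf.integrable hp) hfm

/-- For sub-σ-algebras `V ⊆ W₀` and `V ⊆ W₁` of a probability space, the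
conditional expectations over `W₁` and over `V` agree on all a.e. `W₀`-measurable `Lp`
functions iff the conditional expectation over `V` multiplies on intersections of sets from
`W₀` and `W₁`. -/
theorem condexp_eq_iff_condexp_inter_mul
    {X : Type*} {mX : MeasurableSpace X} (μ : Measure X) [IsProbabilityMeasure μ]
    (p : ℝ≥0∞) (hp : 1 ≤ p) (hp' : p ≠ ⊤)
    (V W₀ W₁ : MeasurableSpace X) (hVW₀ : V ≤ W₀) (hVW₁ : V ≤ W₁)
    (hW₀ : W₀ ≤ mX) (hW₁ : W₁ ≤ mX) :
    (∀ f : X → ℝ, MemLp f p μ → AEStronglyMeasurable[W₀] f μ →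
        μ[f | W₁] =ᵐ[μ] μ[f | V]) ↔
      (∀ P₀ P₁ : Set X, MeasurableSet[W₀] P₀ → MeasurableSet[W₁] P₁ →
        μ[Set.indicator (P₀ ∩ P₁) (fun _ => (1 : ℝ)) | V]
          =ᵐ[μ] μ[Set.indicator P₀ (fun _ => (1 : ℝ)) | V]
            * μ[Set.indicator P₁ (fun _ => (1 : ℝ)) | V]) :=
  condexp_eq_iff_condexp_inter_mul_general μ p hp V W₀ W₁ hVW₁ hW₀ hW₁
end

section
/- Fix 1 ≤ p < ∞. Let (X, 𝒜, μ) be a probability space, f ∈ Lp(μ), and B ⊆ 𝒜 a sub-σ-algebra. Then there exists a countably generated sub-σ-algebra C ⊆ B such that μ[g|B] = μ[g|C] a.e. for every g ∈ Lp(μ) that is a.e. equal to a function measurable with respect to the σ-algebra generated by σ(f) ∪ C, where σ(f) is the σ-algebra generated by f. -/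
/-!
Take `C = ⨆ n, Cₙ` with `C₀ = ⊥`, where `Cₙ₊₁ ≤ B` adds to `Cₙ` the σ-algebras `σ(μ[u|B])` for
`u` in a countable L¹-dense subset of `L¹(σ(f) ⊔ Cₙ)`; such a subset exists because
`σ(f) ⊔ Cₙ` is countably generated. Conditional expectation is an L¹-contraction and L¹-limits
of `C`-measurable functions are `C`-measurable, so `μ[g|B]` is `C`-measurable for every
`g ∈ L¹(σ(f) ⊔ Cₙ)`, and by Lévy's upward theorem along the filtration `σ(f) ⊔ Cₙ` also for
every `g ∈ L¹(σ(f) ⊔ C)`. A `C`-measurable `μ[g|B]` is `μ[g|C]` by the tower property.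
-/

open MeasureTheory ENNReal Filter Topology TopologicalSpace

theorem exists_seq_of_forall_exists {α : Type*} {P : α → Prop} {r : α → α → Prop} {a : α}
    (ha : P a) (h : ∀ a, P a → ∃ b, P b ∧ r a b) :
    ∃ c : ℕ → α, (∀ n, P (c n)) ∧ ∀ n, r (c n) (c (n + 1)) := by
  choose! F hFP hFr using h
  have hP : ∀ n, P (F^[n] a) := fun n ↦ by
    induction n with
    | zero => exact ha
    | succ n ih => rw [Function.iterate_succ_apply']; exact hFP _ ih
  refine ⟨fun n ↦ F^[n] a, hP, fun n ↦ ?_⟩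
  simpa only [Function.iterate_succ_apply'] using hFr _ (hP n)

namespace MeasurableSpace.CountablyGenerated

variable {X : Type*}

theorem bot : @CountablyGenerated X ⊥ :=
  @CountablyGenerated.mk X ⊥ ⟨∅, Set.countable_empty, generateFrom_empty.symm⟩

theorem iSup {ι : Sort*} [Countable ι] {m : ι → MeasurableSpace X}
    (h : ∀ i, @CountablyGenerated X (m i)) : @CountablyGenerated X (⨆ i, m i) := by
  choose S hS hmS using fun i ↦ (h i).isCountablyGenerated
  exact @CountablyGenerated.mk X (⨆ i, m i)
    ⟨⋃ i, S i, Set.countable_iUnion hS, by rw [← iSup_generateFrom]; exact iSup_congr hmS⟩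

end MeasurableSpace.CountablyGenerated

namespace MeasureTheory

variable {X E : Type*} {m m₀ : MeasurableSpace X} {μ : Measure[m₀] X}

section Comap

variable [TopologicalSpace E] [IsCompletelyMetrizableSpace E] [Nonempty E] {Y : Type*}
  {mY : MeasurableSpace Y} {φ ψ : X → Y} {g : X → E}

/-- By the Doob–Dynkin lemma, `g` is a.e. equal to `e ∘ φ` with `e` strongly measurable. -/
theorem AEStronglyMeasurable.comap_of_ae_eq (hφψ : φ =ᵐ[μ] ψ)
    (hg : AEStronglyMeasurable[mY.comap φ] g μ) : AEStronglyMeasurable[mY.comap ψ] g μ := by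
  obtain ⟨e, he, hge⟩ := hg.stronglyMeasurable_mk.exists_eq_measurable_comp
  refine ⟨e ∘ ψ, he.comp_measurable (comap_measurable ψ), ?_⟩
  filter_upwards [hg.ae_eq_mk, hφψ] with x h₁ h₂
  rw [h₁, hge, Function.comp_apply, h₂, Function.comp_apply]

theorem AEStronglyMeasurable.comap_sup_of_ae_eq (hφψ : φ =ᵐ[μ] ψ)
    (hg : AEStronglyMeasurable[mY.comap φ ⊔ m] g μ) :
    AEStronglyMeasurable[mY.comap ψ ⊔ m] g μ := by
  have hprod (χ : X → Y) : mY.comap χ ⊔ m = (mY.prod m).comap fun x ↦ (χ x, id x) := by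
    rw [MeasurableSpace.comap_prodMk, MeasurableSpace.comap_id]
  rw [hprod] at hg ⊢
  exact hg.comap_of_ae_eq (hφψ.mono fun x hx ↦ by rw [hx])

end Comap

theorem aestronglyMeasurable_of_tendsto_eLpNorm [NormedAddCommGroup E] [CompleteSpace E]
    (hm : m ≤ m₀) {p : ℝ≥0∞} (hp : p ≠ 0) {f : ℕ → X → E} {g : X → E}
    (hf : ∀ n, AEStronglyMeasurable[m] (f n) μ) (hg : AEStronglyMeasurable g μ)
    (hfg : Tendsto (fun n ↦ eLpNorm (f n - g) p μ) atTop (𝓝 0)) :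
    AEStronglyMeasurable[m] g μ := by
  obtain ⟨ns, -, hns⟩ :=
    (tendstoInMeasure_of_tendsto_eLpNorm hp (fun n ↦ (hf n).mono hm) hg hfg).exists_seq_tendsto_ae
  refine ⟨fun x ↦ limUnder atTop fun n ↦ (hf (ns n)).mk _ x,
    by let := m; exact .limUnder fun n ↦ (hf (ns n)).stronglyMeasurable_mk, ?_⟩
  filter_upwards [hns, ae_all_iff.2 fun n ↦ (hf (ns n)).ae_eq_mk] with x hx hmk
  exact (hx.congr hmk).limUnder_eq.symm

theorem aestronglyMeasurable_condExp_of_tendsto_eLpNorm [NormedAddCommGroup E]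
    [NormedSpace ℝ E] [CompleteSpace E] {B C : MeasurableSpace X} (hC : C ≤ m₀) {p : ℝ≥0∞}
    (hp : 1 ≤ p) {f : ℕ → X → E} {g : X → E} (hf : ∀ n, Integrable (f n) μ)
    (hg : Integrable g μ) (hfg : Tendsto (fun n ↦ eLpNorm (f n - g) p μ) atTop (𝓝 0))
    (hfC : ∀ n, AEStronglyMeasurable[C] (μ[f n | B]) μ) :
    AEStronglyMeasurable[C] (μ[g | B]) μ := by
  refine aestronglyMeasurable_of_tendsto_eLpNorm hC (one_pos.trans_le hp).ne' hfC
    integrable_condExp.aestronglyMeasurable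
    (tendsto_of_tendsto_of_tendsto_of_le_of_le tendsto_const_nhds hfg (fun _ ↦ zero_le) fun n ↦ ?_)
  calc eLpNorm (μ[f n | B] - μ[g | B]) p μ = eLpNorm (μ[f n - g | B]) p μ :=
        eLpNorm_congr_ae (condExp_sub (hf n) hg B).symm
    _ ≤ eLpNorm (f n - g) p μ := eLpNorm_condExp_le_eLpNorm _ hp

theorem isSeparable_setOf_aestronglyMeasurable [NormedAddCommGroup E] [SeparableSpace E]
    {p : ℝ≥0∞} [Fact (1 ≤ p)] [Fact (p ≠ ∞)] (hm : m ≤ m₀)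
    [@MeasurableSpace.CountablyGenerated X m] [SFinite (μ.trim hm)] :
    TopologicalSpace.IsSeparable {f : Lp E p μ | AEStronglyMeasurable[m] f μ} := by
  let e := (lpMeasSubgroupToLpTrimIso E p μ hm).symm
  have hrange : Set.range (fun f ↦ (e f : Lp E p μ)) =
      {f : Lp E p μ | AEStronglyMeasurable[m] f μ} := by
    ext f
    refine ⟨?_, fun hf ↦ ⟨e.symm ⟨f, mem_lpMeasSubgroup_iff_aestronglyMeasurable.2 hf⟩, by simp⟩⟩
    rintro ⟨g, rfl⟩
    exact mem_lpMeasSubgroup_iff_aestronglyMeasurable.1 (e g).2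
  exact hrange ▸ isSeparable_range (continuous_subtype_val.comp e.continuous)

theorem exists_countablyGenerated_aestronglyMeasurable_condExp [NormedAddCommGroup E]
    [NormedSpace ℝ E] [CompleteSpace E] [SecondCountableTopology E] [MeasurableSpace E]
    [BorelSpace E] {B : MeasurableSpace X} (hm : m ≤ m₀) [@MeasurableSpace.CountablyGenerated X m]
    [SFinite (μ.trim hm)] (hB : B ≤ m₀) :
    ∃ C ≤ B, @MeasurableSpace.CountablyGenerated X C ∧ ∀ g : X → E, Integrable g μ →
      AEStronglyMeasurable[m] g μ → AEStronglyMeasurable[C] (μ[g | B]) μ := by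
  have : Fact ((1 : ℝ≥0∞) ≠ ∞) := ⟨one_ne_top⟩
  obtain ⟨D, hD, hmD⟩ := isSeparable_setOf_aestronglyMeasurable (E := E) (μ := μ) (p := 1) hm
  have := hD.to_subtype
  let C := ⨆ d : D, MeasurableSpace.comap (μ[⇑(d : Lp E 1 μ) | B]) ‹MeasurableSpace E›
  have hCB : C ≤ B := iSup_le fun _ ↦ stronglyMeasurable_condExp.measurable.comap_le
  refine ⟨C, hCB, .iSup fun _ ↦ .comap _, fun g hg hgm ↦ ?_⟩
  obtain ⟨v, hvD, hv⟩ := mem_closure_iff_seq_limit.1 <|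
    hmD (hgm.congr hg.coeFn_toL1.symm : AEStronglyMeasurable[m] (hg.toL1 g) μ)
  refine aestronglyMeasurable_condExp_of_tendsto_eLpNorm (hCB.trans hB) le_rfl
    (fun n ↦ L1.integrable_coeFn (v n)) hg ?_ fun n ↦ ?_
  · have hv' : Tendsto (fun n ↦ eLpNorm (⇑(v n) - ⇑(hg.toL1 g)) 1 μ) atTop (𝓝 0) :=
      (Lp.tendsto_Lp_iff_tendsto_eLpNorm' v _).1 hv
    have heq (n : ℕ) : eLpNorm (⇑(v n) - ⇑(hg.toL1 g)) 1 μ = eLpNorm (⇑(v n) - g) 1 μ :=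
      eLpNorm_congr_ae (EventuallyEq.rfl.sub hg.coeFn_toL1)
    exact hv'.congr heq
  · exact ((comap_measurable _).stronglyMeasurable.aestronglyMeasurable).mono
      (le_iSup_of_le (⟨v n, hvD n⟩ : D) le_rfl)

/-- `μ[g | ℱ n] → g` in L¹ by Lévy's upward theorem. -/
theorem aestronglyMeasurable_condExp_of_forall_filtration [IsFiniteMeasure μ]
    (ℱ : Filtration ℕ m₀) {B C : MeasurableSpace X} (hC : C ≤ m₀)
    (hℱ : ∀ n (f : X → ℝ), Integrable f μ → AEStronglyMeasurable[ℱ n] f μ →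
      AEStronglyMeasurable[C] (μ[f | B]) μ)
    {g : X → ℝ} (hg : Integrable g μ) (hgm : AEStronglyMeasurable[⨆ n, ℱ n] g μ) :
    AEStronglyMeasurable[C] (μ[g | B]) μ := by
  have hlim : μ[g | ⨆ n, ℱ n] =ᵐ[μ] g :=
    condExp_of_aestronglyMeasurable' (iSup_le ℱ.le) hgm hg
  have heq (n : ℕ) :
      eLpNorm (μ[g | ℱ n] - μ[g | ⨆ n, ℱ n]) 1 μ = eLpNorm (μ[g | ℱ n] - g) 1 μ :=
    eLpNorm_congr_ae (EventuallyEq.rfl.sub hlim)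
  exact aestronglyMeasurable_condExp_of_tendsto_eLpNorm hC le_rfl (fun _ ↦ integrable_condExp) hg
    ((tendsto_eLpNorm_condExp g).congr heq) fun n ↦
      hℱ n _ integrable_condExp stronglyMeasurable_condExp.aestronglyMeasurable

theorem condExp_ae_eq_of_aestronglyMeasurable_condExp [NormedAddCommGroup E] [NormedSpace ℝ E]
    [CompleteSpace E] {B C : MeasurableSpace X} (hCB : C ≤ B) (hB : B ≤ m₀)
    [SigmaFinite (μ.trim hB)] [SigmaFinite (μ.trim (hCB.trans hB))] {g : X → E}
    (h : AEStronglyMeasurable[C] (μ[g | B]) μ) : μ[g | B] =ᵐ[μ] μ[g | C] :=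
  (condExp_of_aestronglyMeasurable' (hCB.trans hB) h integrable_condExp).symm.trans
    (condExp_condExp_of_le hCB hB)

theorem exists_countablyGenerated_aestronglyMeasurable_condExp_sup [IsFiniteMeasure μ]
    {B : MeasurableSpace X} (hm : m ≤ m₀) [hmcg : @MeasurableSpace.CountablyGenerated X m]
    (hB : B ≤ m₀) :
    ∃ C ≤ B, @MeasurableSpace.CountablyGenerated X C ∧ ∀ g : X → ℝ, Integrable g μ →
      AEStronglyMeasurable[m ⊔ C] g μ → AEStronglyMeasurable[C] (μ[g | B]) μ := by
  obtain ⟨c, hcB, hc⟩ := exists_seq_of_forall_exists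
    (P := fun C ↦ C ≤ B ∧ @MeasurableSpace.CountablyGenerated X C)
    (r := fun C C' ↦ C ≤ C' ∧ ∀ g : X → ℝ, Integrable g μ →
      AEStronglyMeasurable[m ⊔ C] g μ → AEStronglyMeasurable[C'] (μ[g | B]) μ)
    ⟨bot_le, .bot⟩ fun C ⟨hCB, hC⟩ ↦ by
      have := hmcg.sup hC
      obtain ⟨C', hC'B, hC', hC'g⟩ := exists_countablyGenerated_aestronglyMeasurable_condExp
        (E := ℝ) (μ := μ) (sup_le hm (hCB.trans hB)) hB
      exact ⟨C ⊔ C', ⟨sup_le hCB hC'B, hC.sup hC'⟩, le_sup_left,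
        fun g hg hgm ↦ (hC'g g hg hgm).mono le_sup_right⟩
  let ℱ : Filtration ℕ m₀ := ⟨fun n ↦ m ⊔ c n,
    monotone_nat_of_le_succ fun n ↦ sup_le_sup_left (hc n).1 _,
    fun n ↦ sup_le hm ((hcB n).1.trans hB)⟩
  have hℱ : ⨆ n, ℱ n = m ⊔ ⨆ n, c n := sup_iSup.symm
  have hCB : ⨆ n, c n ≤ B := iSup_le fun n ↦ (hcB n).1
  exact ⟨⨆ n, c n, hCB, .iSup fun n ↦ (hcB n).2, fun g hg hgm ↦
    aestronglyMeasurable_condExp_of_forall_filtration ℱ (hCB.trans hB)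
      (fun n g hg hgm ↦ ((hc n).2 g hg hgm).mono (le_iSup c (n + 1))) hg (hℱ ▸ hgm)⟩

end MeasureTheory

theorem exists_countably_generated_condexp_eq_general
    {X : Type*} {mX : MeasurableSpace X} (μ : Measure X) [IsProbabilityMeasure μ]
    (p : ℝ≥0∞) (hp : 1 ≤ p)
    (f : X → ℝ) (hf : MemLp f p μ) (B : MeasurableSpace X) (hB : B ≤ mX) :
    ∃ C : MeasurableSpace X, C ≤ B ∧
      (∃ S : Set (Set X), S.Countable ∧ C = MeasurableSpace.generateFrom S) ∧
      ∀ g : X → ℝ, MemLp g p μ →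
        AEStronglyMeasurable[MeasurableSpace.comap f Real.measurableSpace ⊔ C] g μ →
        μ[g | B] =ᵐ[μ] μ[g | C] := by
  obtain ⟨σf, hσf, hσfcg, hfσf⟩ : ∃ σf ≤ mX, @MeasurableSpace.CountablyGenerated X σf ∧
      ∀ (C : MeasurableSpace X) (g : X → ℝ),
        AEStronglyMeasurable[MeasurableSpace.comap f Real.measurableSpace ⊔ C] g μ →
        AEStronglyMeasurable[σf ⊔ C] g μ :=
    ⟨_, hf.1.stronglyMeasurable_mk.measurable.comap_le, .comap _,
      fun _ _ hg ↦ hg.comap_sup_of_ae_eq hf.1.ae_eq_mk⟩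
  obtain ⟨C, hCB, hC, hCg⟩ :=
    exists_countablyGenerated_aestronglyMeasurable_condExp_sup (μ := μ) hσf hB
  exact ⟨C, hCB, hC.1, fun g hg hgm ↦ condExp_ae_eq_of_aestronglyMeasurable_condExp hCB hB
    (hCg g (hg.integrable hp) (hfσf C g hgm))⟩

/-- Local character. For `f ∈ Lp(μ)` over a probability space and a
sub-σ-algebra `B`, there is a countably generated sub-σ-algebra `C ⊆ B` such that the
conditional expectations over `B` and over `C` agree on all `Lp` functions that are a.e.
measurable with respect to the σ-algebra generated by `σ(f) ∪ C`. -/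
theorem exists_countably_generated_condexp_eq
    {X : Type*} {mX : MeasurableSpace X} (μ : Measure X) [IsProbabilityMeasure μ]
    (p : ℝ≥0∞) (hp : 1 ≤ p) (hp' : p ≠ ⊤)
    (f : X → ℝ) (hf : MemLp f p μ) (B : MeasurableSpace X) (hB : B ≤ mX) :
    ∃ C : MeasurableSpace X, C ≤ B ∧
      (∃ S : Set (Set X), S.Countable ∧ C = MeasurableSpace.generateFrom S) ∧
      ∀ g : X → ℝ, MemLp g p μ →
        AEStronglyMeasurable[MeasurableSpace.comap f Real.measurableSpace ⊔ C] g μ →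
        μ[g | B] =ᵐ[μ] μ[g | C] :=
  exists_countably_generated_condexp_eq_general μ p hp f hf B hB
end

section
/- Fix 1 ≤ p < ∞. Let (X, 𝒜, μ) be a probability space, V ⊆ 𝒜 a sub-σ-algebra, f ∈ Lp(μ) with f ≥ 0 a.e., and r ∈ (0,1). Then every g in the norm-closure of S_r(f) in Lp(μ) satisfies ‖g‖_p ≤ r^{-1/p} ‖f‖_p. -/
/-! For `g ∈ S_r(f)` the function `H = |g|^p` is `V`-measurable, so pulling it out of the
conditional expectation gives `r ∫ H ≤ ∫ H ⬝ μ[χ_{g ≤ f} | V] = ∫_{g ≤ f} H ≤ ∫ |f|^p`.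
Hence `‖g‖_p^p ≤ ‖f‖_p^p / r` on `S_r(f)`, and this bound passes to the closure. -/

open MeasureTheory ENNReal

/-- The set `S_r(f)` of nonnegative, a.e. `V`-measurable elements `g` of `Lp(μ)` such that
`μ[χ_{g ≤ f} | V] ≥ r'` a.e. for some `r' > r`. -/
def SrSet {X : Type*} {_mX : MeasurableSpace X} {μ : Measure X} {p : ℝ≥0∞}
    [Fact (1 ≤ p)] (V : MeasurableSpace X) (f : Lp ℝ p μ) (r : ℝ) : Set (Lp ℝ p μ) :=
  {g | 0 ≤ᵐ[μ] ⇑g ∧ AEStronglyMeasurable[V] (⇑g) μ ∧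
    ∃ r' : ℝ, r < r' ∧
      ∀ᵐ x ∂μ, r' ≤ (μ[Set.indicator {y | g y ≤ f y} (fun _ => (1 : ℝ)) | V]) x}

section

variable {X : Type*} {m mX : MeasurableSpace X} {μ : Measure X}

theorem integral_mul_condExp_of_aestronglyMeasurable_left (hm : m ≤ mX)
    [SigmaFinite (μ.trim hm)] {f g : X → ℝ} (hf : AEStronglyMeasurable[m] f μ)
    (hfg : Integrable (f * g) μ) (hg : Integrable g μ) :
    ∫ x, f x * μ[g | m] x ∂μ = ∫ x, f x * g x ∂μ :=
  (integral_congr_ae (condExp_mul_of_aestronglyMeasurable_left hf hfg hg)).symm.trans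
    (integral_condExp hm)

theorem mul_integral_le_setIntegral_of_le_condExp_indicator [IsFiniteMeasure μ] (hm : m ≤ mX)
    {H : X → ℝ} {s : Set X} {c : ℝ} (hHm : AEStronglyMeasurable[m] H μ) (hH0 : 0 ≤ᵐ[μ] H)
    (hHi : Integrable H μ) (hs : MeasurableSet s)
    (hc : ∀ᵐ x ∂μ, c ≤ μ[s.indicator (fun _ => (1 : ℝ)) | m] x) :
    c * ∫ x, H x ∂μ ≤ ∫ x in s, H x ∂μ := by
  set χ := s.indicator fun _ => (1 : ℝ)
  have hHχ : H * χ = s.indicator H := by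
    ext x; by_cases hx : x ∈ s <;> simp [χ, hx]
  have hHχi : Integrable (H * χ) μ := hHχ ▸ hHi.indicator hs
  have hχi : Integrable χ μ := (integrable_const 1).indicator hs
  have hpull := condExp_mul_of_aestronglyMeasurable_left hHm hHχi hχi
  calc c * ∫ x, H x ∂μ = ∫ x, H x * c ∂μ := by rw [integral_mul_const, mul_comm]
    _ ≤ ∫ x, H x * μ[χ | m] x ∂μ := by
        refine integral_mono_ae (hHi.mul_const c) (integrable_condExp.congr hpull) ?_
        filter_upwards [hc, hH0] with x hcx hHx
        exact mul_le_mul_of_nonneg_left hcx hHx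
    _ = ∫ x, (H * χ) x ∂μ := integral_mul_condExp_of_aestronglyMeasurable_left hm hHm hHχi hχi
    _ = ∫ x in s, H x ∂μ := by rw [hHχ, integral_indicator hs]

theorem Lp.norm_eq_integral_norm_rpow {E : Type*} [NormedAddCommGroup E] {p : ℝ≥0∞}
    (hp₀ : p ≠ 0) (hp : p ≠ ⊤) (f : Lp E p μ) :
    ‖f‖ = (∫ x, ‖f x‖ ^ p.toReal ∂μ) ^ p.toReal⁻¹ := by
  rw [Lp.norm_def, toReal_eLpNorm (Lp.aestronglyMeasurable f),
    lpNorm_eq_integral_norm_rpow_toReal hp₀ hp (Lp.aestronglyMeasurable f)]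

theorem Lp.norm_le_rpow_mul_norm_of_mul_integral_norm_rpow_le {E : Type*}
    [NormedAddCommGroup E] {p : ℝ≥0∞} (hp₀ : p ≠ 0) (hp : p ≠ ⊤) {f g : Lp E p μ} {r : ℝ}
    (hr : 0 < r)
    (h : r * ∫ x, ‖g x‖ ^ p.toReal ∂μ ≤ ∫ x, ‖f x‖ ^ p.toReal ∂μ) :
    ‖g‖ ≤ r ^ (-(1 : ℝ) / p.toReal) * ‖f‖ := by
  have hq : 0 ≤ p.toReal := ENNReal.toReal_nonneg
  have hIg : 0 ≤ ∫ x, ‖g x‖ ^ p.toReal ∂μ := integral_nonneg fun _ => by positivity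
  have hIf : 0 ≤ ∫ x, ‖f x‖ ^ p.toReal ∂μ := integral_nonneg fun _ => by positivity
  rw [Lp.norm_eq_integral_norm_rpow hp₀ hp, Lp.norm_eq_integral_norm_rpow hp₀ hp]
  calc (∫ x, ‖g x‖ ^ p.toReal ∂μ) ^ p.toReal⁻¹
      ≤ ((∫ x, ‖f x‖ ^ p.toReal ∂μ) / r) ^ p.toReal⁻¹ :=
        Real.rpow_le_rpow hIg ((le_div_iff₀' hr).2 h) (inv_nonneg.2 hq)
    _ = r ^ (-(1 : ℝ) / p.toReal) * (∫ x, ‖f x‖ ^ p.toReal ∂μ) ^ p.toReal⁻¹ := by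
        rw [Real.div_rpow hIf hr.le, div_eq_mul_inv, mul_comm, ← Real.rpow_neg hr.le, neg_div,
          one_div]

theorem mul_integral_norm_rpow_le_of_mem_SrSet [IsFiniteMeasure μ] {p : ℝ≥0∞} [Fact (1 ≤ p)]
    {V : MeasurableSpace X} (hV : V ≤ mX) {f g : Lp ℝ p μ} {r : ℝ} (hg : g ∈ SrSet V f r) :
    r * ∫ x, ‖g x‖ ^ p.toReal ∂μ ≤ ∫ x, ‖f x‖ ^ p.toReal ∂μ := by
  obtain ⟨hg0, hgV, r', hrr', hcond⟩ := hg
  have hq : 0 ≤ p.toReal := ENNReal.toReal_nonneg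
  have hs : MeasurableSet[mX] {y | g y ≤ f y} :=
    measurableSet_le (Lp.stronglyMeasurable g).measurable (Lp.stronglyMeasurable f).measurable
  have hgi := (Lp.memLp g).integrable_norm_rpow'
  have hfi := (Lp.memLp f).integrable_norm_rpow'
  calc r * ∫ x, ‖g x‖ ^ p.toReal ∂μ ≤ r' * ∫ x, ‖g x‖ ^ p.toReal ∂μ :=
        mul_le_mul_of_nonneg_right hrr'.le (integral_nonneg fun _ => by positivity)
    _ ≤ ∫ x in {y | g y ≤ f y}, ‖g x‖ ^ p.toReal ∂μ :=
        mul_integral_le_setIntegral_of_le_condExp_indicator hV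
          ((continuous_norm.rpow_const fun _ => Or.inr hq).comp_aestronglyMeasurable hgV)
          (.of_forall fun _ => by positivity) hgi hs hcond
    _ ≤ ∫ x in {y | g y ≤ f y}, ‖f x‖ ^ p.toReal ∂μ := by
        refine setIntegral_mono_on_ae hgi.integrableOn hfi.integrableOn hs ?_
        filter_upwards [hg0] with x hgx hx
        have hle : g x ≤ f x := hx
        rw [Real.norm_of_nonneg hgx, Real.norm_of_nonneg (hgx.trans hle)]
        exact Real.rpow_le_rpow hgx hle hq
    _ ≤ ∫ x, ‖f x‖ ^ p.toReal ∂μ :=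
        setIntegral_le_integral hfi (.of_forall fun _ => by positivity)

end

theorem norm_le_of_mem_closure_SrSet_general
    {X : Type*} {mX : MeasurableSpace X} (μ : Measure X) [IsProbabilityMeasure μ]
    (p : ℝ≥0∞) [Fact (1 ≤ p)] (hp' : p ≠ ⊤)
    (V : MeasurableSpace X) (hV : V ≤ mX)
    (f : Lp ℝ p μ) (r : ℝ) (hr : r ∈ Set.Ioo (0 : ℝ) 1) :
    ∀ g ∈ closure (SrSet V f r), ‖g‖ ≤ r ^ (-(1 : ℝ) / p.toReal) * ‖f‖ := by
  have hp₀ : p ≠ 0 := (zero_lt_one.trans_le (Fact.out : (1 : ℝ≥0∞) ≤ p)).ne'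
  intro g hg
  refine closure_minimal (fun h hh => ?_) (isClosed_le continuous_norm continuous_const) hg
  exact Lp.norm_le_rpow_mul_norm_of_mul_integral_norm_rpow_le hp₀ hp' hr.1
    (mul_integral_norm_rpow_le_of_mem_SrSet hV hh)

/-- Every `g` in the norm-closure of `S_r(f)` satisfies
`‖g‖_p ≤ r^{-1/p} ‖f‖_p`. -/
theorem norm_le_of_mem_closure_SrSet
    {X : Type*} {mX : MeasurableSpace X} (μ : Measure X) [IsProbabilityMeasure μ]
    (p : ℝ≥0∞) [Fact (1 ≤ p)] (hp' : p ≠ ⊤)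
    (V : MeasurableSpace X) (hV : V ≤ mX)
    (f : Lp ℝ p μ) (hf : 0 ≤ᵐ[μ] ⇑f) (r : ℝ) (hr : r ∈ Set.Ioo (0 : ℝ) 1) :
    ∀ g ∈ closure (SrSet V f r), ‖g‖ ≤ r ^ (-(1 : ℝ) / p.toReal) * ‖f‖ :=
  norm_le_of_mem_closure_SrSet_general μ p hp' V hV f r hr
end

section
/- Fix 1 ≤ p < ∞. Let (X, 𝒜, μ) be a probability space, V ⊆ 𝒜 a sub-σ-algebra, f ∈ Lp(μ), and r ∈ [0,1]. Then μ[χ_{{f ≤ 0}} | V] ≥ r a.e. if and only if for every g ∈ Lp(μ) with g ≥ 0 a.e. and g a.e. equal to a V-measurable function, and every n ∈ ℕ, ‖(n·f)⁺ ⊓ g‖_p ≤ (1−r)^{1/p} ‖g‖_p, where (n·f)⁺ ⊓ g denotes the pointwise minimum of the positive part of n·f and g. -/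
/-! Write `T = {f > 0}`. As `n → ∞`, `min ((n f)⁺, g)` increases to `g` on `T` and vanishes off
`T`, so by monotone convergence the norm condition for a fixed `g` says
`∫_T |g|^p ≤ (1 - r) ∫ |g|^p`. For `g = χ_A` with `A ∈ V` this reads `μ(A ∩ T) ≤ (1 - r) μ(A)`,
which by the defining property of conditional expectation is equivalent to
`μ[χ_{f ≤ 0} | V] ≥ r` a.e. Conversely, these set inequalities say that `μ` restricted to `T` is
at most `(1 - r) μ` as measures on `V`, which gives the integral inequality for every
`V`-measurable `|g|^p`. -/

open MeasureTheory ENNReal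

section
variable {X : Type*} {m m₀ : MeasurableSpace X} {μ : Measure X}

theorem ae_const_le_condExp_iff [IsFiniteMeasure μ] (hm : m ≤ m₀) {φ : X → ℝ}
    (hφ : Integrable φ μ) (r : ℝ) :
    (∀ᵐ x ∂μ, r ≤ μ[φ|m] x) ↔ ∀ A, MeasurableSet[m] A → r * μ.real A ≤ ∫ x in A, φ x ∂μ := by
  have : IsFiniteMeasure (μ.trim hm) := isFiniteMeasure_trim hm
  constructor
  · intro h A hA
    rw [← setIntegral_condExp hm hφ hA]
    calc r * μ.real A = ∫ _ in A, r ∂μ := by rw [setIntegral_const, smul_eq_mul, mul_comm]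
      _ ≤ ∫ x in A, μ[φ|m] x ∂μ :=
        setIntegral_mono_ae (integrableOn_const (measure_ne_top μ A))
          integrable_condExp.integrableOn h
  · intro h
    refine ae_of_ae_trim hm (ae_le_of_forall_setIntegral_le (integrable_const r)
      (integrable_condExp.trim hm stronglyMeasurable_condExp) fun A hA _ => ?_)
    rw [← setIntegral_trim hm stronglyMeasurable_const hA,
      ← setIntegral_trim hm stronglyMeasurable_condExp hA, setIntegral_condExp hm hφ hA,
      setIntegral_const, smul_eq_mul, mul_comm]
    exact h A hA

theorem ae_le_condExp_indicator_iff [IsFiniteMeasure μ] (hm : m ≤ m₀) {S : Set X}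
    (hS : NullMeasurableSet S μ) {r : ℝ} (hr : r ≤ 1) :
    (∀ᵐ x ∂μ, r ≤ μ[S.indicator (fun _ => (1 : ℝ))|m] x) ↔
      ∀ A, MeasurableSet[m] A → μ (A ∩ Sᶜ) ≤ ENNReal.ofReal (1 - r) * μ A := by
  rw [ae_const_le_condExp_iff hm ((integrable_const 1).indicator₀ hS) r]
  refine forall₂_congr fun A hA => ?_
  rw [integral_indicator₀ (hS.mono_ac Measure.restrict_le_self.absolutelyContinuous),
    setIntegral_const, measureReal_restrict_apply' (hm A hA), smul_eq_mul, mul_one,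
    ← ENNReal.toReal_le_toReal (measure_ne_top _ _)
      (mul_ne_top ofReal_ne_top (measure_ne_top _ _)),
    toReal_mul, toReal_ofReal (sub_nonneg.2 hr), ← measureReal_def, ← measureReal_def,
    ← Set.sdiff_eq, Set.inter_comm S A]
  have hsplit := measureReal_inter_add_sdiff₀ (s := A) hS
  constructor <;> intro <;> linarith

theorem setLIntegral_le_mul_lintegral_of_measure_inter_le (hm : m ≤ m₀) {T : Set X} {c : ℝ≥0∞}
    (h : ∀ A, MeasurableSet[m] A → μ (A ∩ T) ≤ c * μ A) {G : X → ℝ≥0∞}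
    (hG : AEStronglyMeasurable[m] G μ) :
    ∫⁻ x in T, G x ∂μ ≤ c * ∫⁻ x, G x ∂μ := by
  obtain ⟨G', hG'm, hGG'⟩ := hG
  have hle : (μ.restrict T).trim hm ≤ (c • μ).trim hm := Measure.le_iff.2 fun A hA => by
    rw [trim_measurableSet_eq hm hA, trim_measurableSet_eq hm hA, Measure.restrict_apply (hm A hA),
      Measure.smul_apply, smul_eq_mul]
    exact h A hA
  calc ∫⁻ x in T, G x ∂μ = ∫⁻ x, G' x ∂(μ.restrict T).trim hm := by
        rw [lintegral_trim hm hG'm.measurable]; exact lintegral_congr_ae (ae_restrict_of_ae hGG')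
    _ ≤ ∫⁻ x, G' x ∂(c • μ).trim hm := lintegral_mono' hle le_rfl
    _ = c * ∫⁻ x, G x ∂μ := by
        rw [lintegral_trim hm hG'm.measurable, lintegral_smul_measure, smul_eq_mul,
          lintegral_congr_ae hGG']

theorem enorm_rpow_le_enorm_rpow_of_le {a b : ℝ} (ha : 0 ≤ a) (hab : a ≤ b) {q : ℝ}
    (hq : 0 ≤ q) : ‖a‖ₑ ^ q ≤ ‖b‖ₑ ^ q := by
  rw [Real.enorm_of_nonneg ha, Real.enorm_of_nonneg (ha.trans hab)]
  gcongr

theorem monotone_min_max_nat_mul (y z : ℝ) :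
    Monotone fun n : ℕ => min (max ((n : ℝ) * y) 0) z := by
  intro i j hij
  refine min_le_min_right z ?_
  rcases le_total y 0 with hy | hy
  · simp [mul_nonpos_of_nonneg_of_nonpos (Nat.cast_nonneg _) hy]
  · gcongr

theorem iSup_enorm_min_max_nat_mul_rpow {y z : ℝ} (hz : 0 ≤ z) {q : ℝ} (hq : 0 < q) :
    ⨆ n : ℕ, ‖min (max ((n : ℝ) * y) 0) z‖ₑ ^ q = if 0 < y then ‖z‖ₑ ^ q else 0 := by
  split_ifs with hy
  · refine le_antisymm (iSup_le fun n => ?_) ?_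
    · exact enorm_rpow_le_enorm_rpow_of_le (le_min (le_max_right _ _) hz) (min_le_right _ _)
        hq.le
    · obtain ⟨n, hn⟩ := exists_nat_ge (z / y)
      have hzn : z ≤ n * y := (div_le_iff₀ hy).1 hn
      refine le_iSup_of_le n (le_of_eq ?_)
      rw [min_eq_right (hzn.trans (le_max_left _ _))]
  · have hy : y ≤ 0 := not_lt.1 hy
    simp [mul_nonpos_of_nonneg_of_nonpos (Nat.cast_nonneg _) hy, min_eq_left hz, hq]

theorem iSup_lintegral_enorm_min_max_rpow {f g : X → ℝ} (hf : AEMeasurable f μ)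
    (hg : AEMeasurable g μ) (hg0 : 0 ≤ᵐ[μ] g) {q : ℝ} (hq : 0 < q) :
    ⨆ n : ℕ, ∫⁻ x, ‖min (max ((n : ℝ) * f x) 0) (g x)‖ₑ ^ q ∂μ
      = ∫⁻ x in {x | 0 < f x}, ‖g x‖ₑ ^ q ∂μ := by
  have hmono : ∀ᵐ x ∂μ, Monotone fun n : ℕ => ‖min (max ((n : ℝ) * f x) 0) (g x)‖ₑ ^ q :=
    hg0.mono fun x hx _ _ hij => enorm_rpow_le_enorm_rpow_of_le (le_min (le_max_right _ _) hx)
      (monotone_min_max_nat_mul _ _ hij) hq.le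
  rw [← lintegral_iSup' (fun n => by fun_prop) hmono,
    ← lintegral_indicator₀ (nullMeasurableSet_lt aemeasurable_const hf)]
  refine lintegral_congr_ae (hg0.mono fun x hx => ?_)
  simp only [Set.indicator_apply, Set.mem_ofPred_eq]
  exact iSup_enorm_min_max_nat_mul_rpow hx hq

theorem eLpNorm_le_rpow_mul_eLpNorm_iff {ε ε' : Type*} [ENorm ε] [ENorm ε'] {u : X → ε}
    {v : X → ε'} {p : ℝ≥0∞} (hp0 : p ≠ 0) (hp : p ≠ ∞) (c : ℝ≥0∞) :
    eLpNorm u p μ ≤ c ^ (1 / p.toReal) * eLpNorm v p μ ↔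
      ∫⁻ x, ‖u x‖ₑ ^ p.toReal ∂μ ≤ c * ∫⁻ x, ‖v x‖ₑ ^ p.toReal ∂μ := by
  have hq : 0 < 1 / p.toReal := one_div_pos.2 (ENNReal.toReal_pos hp0 hp)
  rw [eLpNorm_eq_lintegral_rpow_enorm_toReal hp0 hp, eLpNorm_eq_lintegral_rpow_enorm_toReal hp0 hp,
    ← ENNReal.mul_rpow_of_nonneg _ _ hq.le, ENNReal.rpow_le_rpow_iff hq]

theorem forall_eLpNorm_min_max_le_iff {f g : X → ℝ} (hf : AEMeasurable f μ)
    (hg : AEMeasurable g μ) (hg0 : 0 ≤ᵐ[μ] g) {p : ℝ≥0∞} (hp0 : p ≠ 0) (hp : p ≠ ∞)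
    (c : ℝ≥0∞) :
    (∀ n : ℕ, eLpNorm (fun x => min (max ((n : ℝ) * f x) 0) (g x)) p μ
        ≤ c ^ (1 / p.toReal) * eLpNorm g p μ) ↔
      ∫⁻ x in {x | 0 < f x}, ‖g x‖ₑ ^ p.toReal ∂μ ≤ c * ∫⁻ x, ‖g x‖ₑ ^ p.toReal ∂μ := by
  simp_rw [eLpNorm_le_rpow_mul_eLpNorm_iff hp0 hp, ← iSup_le_iff]
  rw [iSup_lintegral_enorm_min_max_rpow hf hg hg0 (ENNReal.toReal_pos hp0 hp)]

end

/-- For `f ∈ Lp(μ)` over a probability space and `r ∈ [0,1]`,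
`μ[χ_{f ≤ 0} | V] ≥ r` a.e. iff for every nonnegative a.e. `V`-measurable `g ∈ Lp(μ)` and
every `n ∈ ℕ`, `‖(n·f)⁺ ⊓ g‖_p ≤ (1 - r)^{1/p} ‖g‖_p`. -/
theorem condexp_indicator_le_iff_norm_min_le
    {X : Type*} {mX : MeasurableSpace X} (μ : Measure X) [IsProbabilityMeasure μ]
    (p : ℝ≥0∞) (hp : 1 ≤ p) (hp' : p ≠ ⊤)
    (V : MeasurableSpace X) (hV : V ≤ mX)
    (f : X → ℝ) (hf : MemLp f p μ) (r : ℝ) (hr : r ∈ Set.Icc (0 : ℝ) 1) :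
    (∀ᵐ x ∂μ, r ≤ (μ[Set.indicator {y | f y ≤ 0} (fun _ => (1 : ℝ)) | V]) x) ↔
      (∀ g : X → ℝ, MemLp g p μ → 0 ≤ᵐ[μ] g → AEStronglyMeasurable[V] g μ →
        ∀ n : ℕ,
          eLpNorm (fun x => min (max ((n : ℝ) * f x) 0) (g x)) p μ
            ≤ ENNReal.ofReal ((1 - r) ^ (1 / p.toReal)) * eLpNorm g p μ) := by
  have hp0 : p ≠ 0 := (zero_lt_one.trans_le hp).ne'
  have hq : 0 < p.toReal := ENNReal.toReal_pos hp0 hp'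
  have hfm := hf.aestronglyMeasurable.aemeasurable
  have hpos : {y | f y ≤ 0}ᶜ = {y | 0 < f y} := by ext; simp
  simp_rw [← ENNReal.ofReal_rpow_of_nonneg (sub_nonneg.2 hr.2) (one_div_pos.2 hq).le]
  rw [ae_le_condExp_indicator_iff hV (nullMeasurableSet_le hfm aemeasurable_const) hr.2, hpos]
  constructor
  · intro h g hg hg0 hgV
    rw [forall_eLpNorm_min_max_le_iff hfm hg.aestronglyMeasurable.aemeasurable hg0 hp0 hp']
    exact setLIntegral_le_mul_lintegral_of_measure_inter_le hV h
      ((ENNReal.continuous_rpow_const.comp continuous_enorm).comp_aestronglyMeasurable hgV)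
  · intro h A hA
    have hAm : MeasurableSet[mX] A := hV A hA
    have hχ0 : 0 ≤ᵐ[μ] A.indicator (fun _ => (1 : ℝ)) :=
      ae_of_all _ (Set.indicator_nonneg fun _ _ => zero_le_one)
    have hχ := (forall_eLpNorm_min_max_le_iff hfm (aemeasurable_const.indicator hAm) hχ0 hp0 hp'
      _).1 (h _ (memLp_indicator_const p hAm (1 : ℝ) (Or.inr (measure_ne_top μ A))) hχ0
        (stronglyMeasurable_const.indicator hA).aestronglyMeasurable)
    have hpow : (fun x => ‖A.indicator (fun _ => (1 : ℝ)) x‖ₑ ^ p.toReal) = A.indicator 1 := by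
      ext x; by_cases hx : x ∈ A <;> simp [hx, hq]
    rwa [hpow, lintegral_indicator_one hAm, lintegral_indicator_one hAm,
      Measure.restrict_apply hAm] at hχ
end

section
/- Fix 1 ≤ p < ∞. Let (X, 𝒜, μ) be a probability space, V ⊆ 𝒜 a sub-σ-algebra, f ∈ Lp(μ) with f ≥ 0 a.e., t ≥ 0, and r ∈ (0,1). Then the set {x ∈ X : μ[χ_{{f ≥ t}} | V](x) ≥ r} equals, up to a μ-null set, the intersection over all rational r' ∈ (0, r) of the sets {x ∈ X : 𝕊_{r'}(f/V)(x) ≥ t}. -/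
open MeasureTheory ENNReal Filter Set Topology

/-- `s` is the conditional `r`-slice `𝕊_r(f/V)` of a (nonnegative) `f`: the greatest element,
in the a.e. pointwise order, of the norm-closure of `S_r(f)`. -/
def IsCondSliceOfNonneg {X : Type*} {_mX : MeasurableSpace X} {μ : Measure X} {p : ℝ≥0∞}
    [Fact (1 ≤ p)] (V : MeasurableSpace X) (f : Lp ℝ p μ) (r : ℝ) (s : Lp ℝ p μ) : Prop :=
  s ∈ closure (SrSet V f r) ∧ ∀ g ∈ closure (SrSet V f r), ⇑g ≤ᵐ[μ] ⇑s

theorem le_of_forall_rat_mem_Ioo_le {r e : ℝ} (hr : 0 < r)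
    (h : ∀ q : ℚ, (q : ℝ) ∈ Ioo 0 r → (q : ℝ) ≤ e) : r ≤ e := by
  obtain ⟨q₀, hq₀, hq₀r⟩ := exists_rat_btwn hr
  have he : 0 ≤ e := hq₀.le.trans (h q₀ ⟨hq₀, hq₀r⟩)
  refine le_of_forall_rat_lt_imp_le fun q hq => ?_
  rcases le_or_gt (q : ℝ) 0 with hq0 | hq0
  · exact hq0.trans he
  · exact h q ⟨hq0, hq⟩

section CondExpIndicator

variable {X : Type*} {m mX : MeasurableSpace X} {μ : Measure X} [IsFiniteMeasure μ]

theorem condExp_indicator_one_mono_on (hm : m ≤ mX) {S T B : Set X} (hS : MeasurableSet[mX] S)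
    (hT : MeasurableSet[mX] T) (hB : MeasurableSet[m] B) (hST : ∀ᵐ x ∂μ, x ∈ B → x ∈ S → x ∈ T) :
    ∀ᵐ x ∂μ, x ∈ B →
      μ[S.indicator (fun _ => (1 : ℝ)) | m] x ≤ μ[T.indicator (fun _ => (1 : ℝ)) | m] x := by
  have hSi : Integrable (S.indicator fun _ => (1 : ℝ)) μ := (integrable_const 1).indicator hS
  have hle : B.indicator (S.indicator fun _ => (1 : ℝ)) ≤ᵐ[μ] T.indicator fun _ => 1 := by
    filter_upwards [hST] with x hx
    classical
    simp only [Set.indicator_apply]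
    split_ifs <;> grind
  filter_upwards [condExp_indicator hSi hB,
    condExp_mono (hSi.indicator (hm B hB)) ((integrable_const 1).indicator hT) hle]
    with x hBS hmono hxB
  rwa [hBS, Set.indicator_of_mem hxB] at hmono

theorem exists_seq_lt_ae_tendsto_condExp_indicator (hm : m ≤ mX) {f : X → ℝ} (hf : Measurable f)
    (t : ℝ) :
    ∃ c : ℕ → ℝ, (∀ k, c k < t) ∧ ∀ᵐ x ∂μ,
      Tendsto (fun k => μ[{y | c k ≤ f y}.indicator (fun _ => (1 : ℝ)) | m] x) atTop
        (𝓝 (μ[{y | t ≤ f y}.indicator (fun _ => (1 : ℝ)) | m] x)) := by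
  set c : ℕ → ℝ := fun k => t - 1 / (k + 1)
  have hc_lt : ∀ k, c k < t := fun k => sub_lt_self t Nat.one_div_pos_of_nat
  have hc_tendsto : Tendsto c atTop (𝓝 t) := by
    simpa [c] using (tendsto_one_div_add_atTop_nhds_zero_nat (𝕜 := ℝ)).const_sub t
  have hpt : ∀ x, Tendsto (fun k => {y | c k ≤ f y}.indicator (fun _ => (1 : ℝ)) x) atTop
      (𝓝 ({y | t ≤ f y}.indicator (fun _ => (1 : ℝ)) x)) := by
    intro x
    rw [tendsto_indicator_const_apply_iff_eventually]
    rcases le_or_gt t (f x) with hx | hx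
    · exact Eventually.of_forall fun k => iff_of_true ((hc_lt k).le.trans hx) hx
    · filter_upwards [hc_tendsto.eventually (eventually_gt_nhds hx)] with k hk
      exact iff_of_false hk.not_ge hx.not_ge
  have hL1 := tendsto_condExpL1_of_dominated_convergence hm (fun _ => (1 : ℝ))
    (fun _ => ((integrable_const 1).indicator
      (measurableSet_le measurable_const hf)).aestronglyMeasurable) (integrable_const 1)
    (fun _ => ae_of_all _ fun x => (norm_indicator_le_norm_self _ x).trans_eq norm_one)
    (ae_of_all _ hpt) (μ := μ)
  obtain ⟨ns, -, hns⟩ := (tendstoInMeasure_of_tendsto_Lp hL1).exists_seq_tendsto_ae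
  refine ⟨c ∘ ns, fun k => hc_lt _, ?_⟩
  filter_upwards [hns, ae_all_iff.2 fun k => condExp_ae_eq_condExpL1 hm (μ := μ)
      ({y | c k ≤ f y}.indicator (fun _ => (1 : ℝ))),
    condExp_ae_eq_condExpL1 hm ({y | t ≤ f y}.indicator (fun _ => (1 : ℝ)))] with x hx hk h0
  simpa only [Function.comp_apply, hk, h0] using hx

end CondExpIndicator

section Slices

variable {X : Type*} {mX : MeasurableSpace X} {μ : Measure X} [IsFiniteMeasure μ]
  {p : ℝ≥0∞} [Fact (1 ≤ p)] {V : MeasurableSpace X}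

theorem indicatorConstLp_mem_srSet (hV : V ≤ mX) {f : Lp ℝ p μ} (hf : 0 ≤ᵐ[μ] ⇑f) {t q r : ℝ}
    (ht : 0 ≤ t) (hqr : q < r) (hr : r ≤ 1) {A : Set X} (hA : MeasurableSet[V] A)
    (hAr : ∀ᵐ x ∂μ, x ∈ A → r ≤ μ[{y | t ≤ f y}.indicator (fun _ => (1 : ℝ)) | V] x) :
    indicatorConstLp p (hV A hA) (measure_ne_top μ A) t ∈ SrSet V f q := by
  set g := indicatorConstLp p (hV A hA) (measure_ne_top μ A) t
  have hg : ⇑g =ᵐ[μ] A.indicator fun _ => t := indicatorConstLp_coeFn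
  have hf_meas : Measurable[mX] f := (Lp.stronglyMeasurable f).measurable
  have htf : MeasurableSet[mX] {y | t ≤ f y} := measurableSet_le measurable_const hf_meas
  have hgf : MeasurableSet[mX] {y | g y ≤ f y} :=
    measurableSet_le (Lp.stronglyMeasurable g).measurable hf_meas
  have hA_le := condExp_indicator_one_mono_on hV htf hgf hA (μ := μ) (by
    filter_upwards [hg] with x hx hxA htfx
    simpa [hx, hxA] using htfx)
  have hAc_le := condExp_indicator_one_mono_on hV MeasurableSet.univ hgf hA.compl (μ := μ) (by
    filter_upwards [hg, hf] with x hx hfx hxA _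
    simpa [hx, Set.indicator_of_notMem hxA] using hfx)
  rw [Set.indicator_univ, condExp_const hV] at hAc_le
  refine ⟨?_, ⟨_, stronglyMeasurable_const.indicator hA, hg⟩, r, hqr, ?_⟩
  · filter_upwards [hg] with x hx
    simpa [hx] using Set.indicator_nonneg (fun _ _ => ht) x
  · filter_upwards [hAr, hA_le, hAc_le] with x hAr hA_le hAc_le
    by_cases hxA : x ∈ A
    · exact (hAr hxA).trans (hA_le hxA)
    · exact hr.trans (hAc_le hxA)

theorem le_condSlice_of_le_condExp_indicator (hV : V ≤ mX) {f : Lp ℝ p μ} (hf : 0 ≤ᵐ[μ] ⇑f)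
    {t q r : ℝ} (ht : 0 ≤ t) (hqr : q < r) (hr : r ≤ 1) {s : Lp ℝ p μ}
    (hs : IsCondSliceOfNonneg V f q s) :
    ∀ᵐ x ∂μ, r ≤ μ[{y | t ≤ f y}.indicator (fun _ => (1 : ℝ)) | V] x → t ≤ s x := by
  have hA : MeasurableSet[V] {x | r ≤ μ[{y | t ≤ f y}.indicator (fun _ => (1 : ℝ)) | V] x} :=
    measurableSet_le measurable_const stronglyMeasurable_condExp.measurable
  have hg := indicatorConstLp_mem_srSet hV hf ht hqr hr hA (ae_of_all _ fun _ => id)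
  filter_upwards [hs.2 _ (subset_closure hg), indicatorConstLp_coeFn_mem (hs := hV _ hA)
    (hμs := measure_ne_top μ _) (c := t) (p := p)] with x hgs hgt hx
  exact (hgt hx).symm.trans_le hgs

theorem lt_condExp_indicator_of_mem_srSet (hV : V ≤ mX) {f g : Lp ℝ p μ} {q : ℝ}
    (hg : g ∈ SrSet V f q) (c : ℝ) :
    ∀ᵐ x ∂μ, c ≤ g x → q < μ[{y | c ≤ f y}.indicator (fun _ => (1 : ℝ)) | V] x := by
  obtain ⟨-, hgV, q', hqq', hq'⟩ := hg
  have hf_meas : Measurable[mX] f := (Lp.stronglyMeasurable f).measurable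
  have hB : MeasurableSet[V] {x | c ≤ hgV.mk g x} :=
    measurableSet_le measurable_const hgV.stronglyMeasurable_mk.measurable
  have hmono := condExp_indicator_one_mono_on hV
    (measurableSet_le (Lp.stronglyMeasurable g).measurable hf_meas)
    (measurableSet_le measurable_const hf_meas) hB (μ := μ) (by
      filter_upwards [hgV.ae_eq_mk] with x hx hcg hgf
      exact (hx ▸ hcg : c ≤ g x).trans hgf)
  filter_upwards [hmono, hq', hgV.ae_eq_mk] with x hmono hq' hx hcg
  exact hqq'.trans_le (hq'.trans (hmono (show c ≤ hgV.mk g x from hx ▸ hcg)))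

theorem le_condExp_indicator_of_lt_of_mem_closure (hV : V ≤ mX) {f s : Lp ℝ p μ} {q : ℝ}
    (hs : s ∈ closure (SrSet V f q)) (c : ℝ) :
    ∀ᵐ x ∂μ, c < s x → q ≤ μ[{y | c ≤ f y}.indicator (fun _ => (1 : ℝ)) | V] x := by
  obtain ⟨g, hg, hgs⟩ := mem_closure_iff_seq_limit.1 hs
  obtain ⟨ns, -, hns⟩ := (tendstoInMeasure_of_tendsto_Lp hgs).exists_seq_tendsto_ae
  filter_upwards [hns, ae_all_iff.2 fun n => lt_condExp_indicator_of_mem_srSet hV (hg (ns n)) c]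
    with x hx hgn hcs
  obtain ⟨n, hn⟩ := (hx.eventually (eventually_gt_nhds hcs)).exists
  exact (hgn n hn.le).le

theorem le_condExp_indicator_of_le_of_mem_closure (hV : V ≤ mX) {f s : Lp ℝ p μ} {q : ℝ}
    (hs : s ∈ closure (SrSet V f q)) (t : ℝ) :
    ∀ᵐ x ∂μ, t ≤ s x → q ≤ μ[{y | t ≤ f y}.indicator (fun _ => (1 : ℝ)) | V] x := by
  obtain ⟨c, hct, hc⟩ :=
    exists_seq_lt_ae_tendsto_condExp_indicator hV (Lp.stronglyMeasurable f).measurable t (μ := μ)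
  filter_upwards [hc, ae_all_iff.2 fun k => le_condExp_indicator_of_lt_of_mem_closure hV hs (c k)]
    with x hx hk hts
  exact ge_of_tendsto' hx fun k => hk k ((hct k).trans_le hts)

end Slices

theorem condexp_indicator_level_set_ae_eq_iInter_slices_general
    {X : Type*} {mX : MeasurableSpace X} (μ : Measure X) [IsProbabilityMeasure μ]
    (p : ℝ≥0∞) [Fact (1 ≤ p)]
    (V : MeasurableSpace X) (hV : V ≤ mX)
    (f : Lp ℝ p μ) (hf : 0 ≤ᵐ[μ] ⇑f) (t : ℝ) (ht : 0 ≤ t)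
    (r : ℝ) (hr : r ∈ Set.Ioo (0 : ℝ) 1)
    (s : ℝ → Lp ℝ p μ)
    (hs : ∀ r' ∈ Set.Ioo (0 : ℝ) 1, IsCondSliceOfNonneg V f r' (s r')) :
    {x | r ≤ (μ[Set.indicator {y | t ≤ f y} (fun _ => (1 : ℝ)) | V]) x}
      =ᵐ[μ] ⋂ (q : ℚ) (_ : (q : ℝ) ∈ Set.Ioo (0 : ℝ) r), {x | t ≤ s (q : ℝ) x} := by
  have hslice : ∀ q : ℚ, (q : ℝ) ∈ Ioo 0 r → IsCondSliceOfNonneg V f q (s q) :=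
    fun q hq => hs q ⟨hq.1, hq.2.trans hr.2⟩
  have hfwd : ∀ᵐ x ∂μ, ∀ q : ℚ, (q : ℝ) ∈ Ioo 0 r →
      r ≤ μ[{y | t ≤ f y}.indicator (fun _ => (1 : ℝ)) | V] x → t ≤ s q x :=
    ae_all_iff.2 fun q => eventually_imp_distrib_left.2 fun hq =>
      le_condSlice_of_le_condExp_indicator hV hf ht hq.2 hr.2.le (hslice q hq)
  have hbwd : ∀ᵐ x ∂μ, ∀ q : ℚ, (q : ℝ) ∈ Ioo 0 r →
      t ≤ s q x → q ≤ μ[{y | t ≤ f y}.indicator (fun _ => (1 : ℝ)) | V] x :=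
    ae_all_iff.2 fun q => eventually_imp_distrib_left.2 fun hq =>
      le_condExp_indicator_of_le_of_mem_closure hV (hslice q hq).1 t
  rw [eventuallyEq_set]
  filter_upwards [hfwd, hbwd] with x hfwd hbwd
  simp only [mem_iInter]
  exact ⟨fun hx q hq => hfwd q hq hx,
    fun hx => le_of_forall_rat_mem_Ioo_le hr.1 fun q hq => hbwd q hq (hx q hq)⟩

/-- For nonnegative `f ∈ Lp(μ)`, `t ≥ 0` and `r ∈ (0,1)`, the set
`{x : μ[χ_{f ≥ t}|V](x) ≥ r}` coincides, up to a null set, with the intersection over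
rational `r' ∈ (0,r)` of the sets `{x : 𝕊_{r'}(f/V)(x) ≥ t}`. -/
theorem condexp_indicator_level_set_ae_eq_iInter_slices
    {X : Type*} {mX : MeasurableSpace X} (μ : Measure X) [IsProbabilityMeasure μ]
    (p : ℝ≥0∞) [Fact (1 ≤ p)] (hp' : p ≠ ⊤)
    (V : MeasurableSpace X) (hV : V ≤ mX)
    (f : Lp ℝ p μ) (hf : 0 ≤ᵐ[μ] ⇑f) (t : ℝ) (ht : 0 ≤ t)
    (r : ℝ) (hr : r ∈ Set.Ioo (0 : ℝ) 1)
    (s : ℝ → Lp ℝ p μ)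
    (hs : ∀ r' ∈ Set.Ioo (0 : ℝ) 1, IsCondSliceOfNonneg V f r' (s r')) :
    {x | r ≤ (μ[Set.indicator {y | t ≤ f y} (fun _ => (1 : ℝ)) | V]) x}
      =ᵐ[μ] ⋂ (q : ℚ) (_ : (q : ℝ) ∈ Set.Ioo (0 : ℝ) r), {x | t ≤ s (q : ℝ) x} :=
  condexp_indicator_level_set_ae_eq_iInter_slices_general μ p V hV f hf t ht r hr s hs
end

section
/- Fix 1 ≤ p < ∞. Let (Ω, 𝒜, μ) be a probability space, V ⊆ 𝒜 a sub-σ-algebra, λ Lebesgue measure on (0,1), and π : Ω × (0,1) → Ω the first projection. Let f, g ∈ Lp(μ ⊗ λ) each be a.e. equal to a (V ⊗ Borel)-measurable function, and each nonincreasing in the second coordinate (for every ω ∈ Ω, r ↦ f(ω, r) and r ↦ g(ω, r) are nonincreasing on (0,1)). If for every Borel set B ⊆ ℝ, (μ ⊗ λ)[χ_{f⁻¹(B)} | π⁻¹(V)] = (μ ⊗ λ)[χ_{g⁻¹(B)} | π⁻¹(V)] a.e., then f = g (μ ⊗ λ)-a.e. -/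
/-!
Conditioning on `π⁻¹(V)` integrates out the second coordinate: for a `(V ⊗ Borel)`-measurable
set `S`, the conditional expectation of `χ_S` is `ω ↦ λ(S_ω)` read off the first coordinate.
So the hypothesis says that for a.e. `ω` the sections `f(ω, ·)` and `g(ω, ·)` have the same
distribution under `λ`. A nonincreasing function is determined a.e. by its distribution: its
superlevel sets are initial segments of `(0,1)`, and two initial segments of equal measure are
nested, hence a.e. equal. Comparing superlevel sets at rational levels gives
`f(ω, ·) = g(ω, ·)` a.e., and Fubini concludes.
-/

open MeasureTheory ENNReal

/-- The product of `μ` with Lebesgue measure on the interval `(0,1)`. -/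
noncomputable def prodLebIoo {Ω : Type*} (mΩ : MeasurableSpace Ω) (μ : Measure Ω) :
    Measure (Ω × Set.Ioo (0 : ℝ) 1) :=
  μ.prod ((volume : Measure ℝ).comap (Subtype.val : Set.Ioo (0 : ℝ) 1 → ℝ))

theorem MeasurableSpace.prod_mono_left {α β : Type*} {m₁ m₂ : MeasurableSpace α} (h : m₁ ≤ m₂)
    (mβ : MeasurableSpace β) : m₁.prod mβ ≤ m₂.prod mβ :=
  sup_le_sup_right (MeasurableSpace.comap_mono h) _

namespace MeasureTheory

theorem _root_.IsLowerSet.ae_eq_of_measure_eq {α : Type*} [MeasurableSpace α] [LinearOrder α]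
    {ν : Measure α} [IsFiniteMeasure ν] {s t : Set α} (hs : IsLowerSet s) (ht : IsLowerSet t)
    (hsm : NullMeasurableSet s ν) (htm : NullMeasurableSet t ν) (h : ν s = ν t) :
    s =ᵐ[ν] t := by
  rcases hs.total ht with hst | hts
  · exact ae_eq_of_subset_of_measure_ge hst h.ge hsm (measure_ne_top ν t)
  · exact (ae_eq_of_subset_of_measure_ge hts h.le htm (measure_ne_top ν s)).symm

theorem ae_eq_of_forall_setOf_rat_lt_ae_eq {α : Type*} [MeasurableSpace α] {ν : Measure α}
    {u v : α → ℝ} (h : ∀ q : ℚ, {x | (q : ℝ) < u x} =ᵐ[ν] {x | (q : ℝ) < v x}) :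
    u =ᵐ[ν] v := by
  filter_upwards [ae_all_iff.2 h] with x hx
  have hiff (q : ℚ) : (q : ℝ) < u x ↔ (q : ℝ) < v x := eq_iff_iff.1 (hx q)
  exact le_antisymm (le_of_forall_rat_lt_imp_le fun q hq => ((hiff q).1 hq).le)
    (le_of_forall_rat_lt_imp_le fun q hq => ((hiff q).2 hq).le)

theorem _root_.Antitone.ae_eq_of_forall_measure_setOf_rat_lt_eq {α : Type*} [MeasurableSpace α]
    [LinearOrder α] [TopologicalSpace α] [OrderClosedTopology α] [OpensMeasurableSpace α]
    {ν : Measure α} [IsFiniteMeasure ν] {u v : α → ℝ} (hu : Antitone u) (hv : Antitone v)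
    (h : ∀ q : ℚ, ν {x | (q : ℝ) < u x} = ν {x | (q : ℝ) < v x}) : u =ᵐ[ν] v := by
  have hlower {w : α → ℝ} (hw : Antitone w) (q : ℚ) : IsLowerSet {x | (q : ℝ) < w x} :=
    isLowerSet_setOfPred.2 fun _ _ hab hb => hb.trans_le (hw hab)
  refine ae_eq_of_forall_setOf_rat_lt_ae_eq fun q => ?_
  exact (hlower hu q).ae_eq_of_measure_eq (hlower hv q)
    (hlower hu q).ordConnected.measurableSet.nullMeasurableSet
    (hlower hv q).ordConnected.measurableSet.nullMeasurableSet (h q)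

section Prod

variable {Ω β : Type*} {V mΩ : MeasurableSpace Ω} {mβ : MeasurableSpace β} {μ : Measure Ω}
  {ν : Measure β}

theorem ae_eq_prod_of_ae_ae_eq [SFinite ν] {γ : Type*} [TopologicalSpace γ]
    [TopologicalSpace.MetrizableSpace γ] {f g : Ω × β → γ} (hf : AEStronglyMeasurable f (μ.prod ν))
    (hg : AEStronglyMeasurable g (μ.prod ν)) (h : ∀ᵐ ω ∂μ, ∀ᵐ y ∂ν, f (ω, y) = g (ω, y)) :
    f =ᵐ[μ.prod ν] g := by
  have hmk : hf.mk f =ᵐ[μ.prod ν] hg.mk g := by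
    refine (Measure.ae_prod_iff_ae_ae
      (hf.stronglyMeasurable_mk.measurableSet_eq_fun hg.stronglyMeasurable_mk)).2 ?_
    filter_upwards [h, Measure.ae_ae_of_ae_prod hf.ae_eq_mk,
      Measure.ae_ae_of_ae_prod hg.ae_eq_mk] with ω hω hfω hgω
    filter_upwards [hω, hfω, hgω] with y hy hfy hgy
    rw [← hfy, hy, hgy]
  exact hf.ae_eq_mk.trans (hmk.trans hg.ae_eq_mk.symm)

variable [IsFiniteMeasure μ] [IsProbabilityMeasure ν]

theorem condExp_comap_fst_ae_eq_integral (hV : V ≤ mΩ) {F : Ω × β → ℝ}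
    (hF : StronglyMeasurable[V.prod mβ] F) (hFi : Integrable F (μ.prod ν)) :
    (μ.prod ν)[F | V.comap Prod.fst] =ᵐ[μ.prod ν] fun x => ∫ y, F (x.1, y) ∂ν := by
  have hm : V.comap Prod.fst ≤ mΩ.prod mβ := (MeasurableSpace.comap_mono hV).trans le_sup_left
  have hG : StronglyMeasurable[V] fun ω => ∫ y, F (ω, y) ∂ν :=
    @StronglyMeasurable.integral_prod_right' Ω β ℝ V mβ ν _ _ _ F hF
  refine (ae_eq_condExp_of_forall_setIntegral_eq hm hFi
    (fun _ _ _ => (hFi.integral_prod_left.comp_fst ν).integrableOn) ?_ ?_).symm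
  · rintro _ ⟨A, -, rfl⟩ -
    rw [← Set.prod_univ, setIntegral_prod _ hFi.integrableOn,
      setIntegral_prod _ (hFi.integral_prod_left.comp_fst ν).integrableOn]
    simp
  · exact (hG.comp_measurable (comap_measurable Prod.fst)).aestronglyMeasurable

theorem condExp_indicator_comap_fst_ae_eq_measureReal (hV : V ≤ mΩ) {S : Set (Ω × β)}
    (hS : MeasurableSet[V.prod mβ] S) :
    (μ.prod ν)[S.indicator fun _ => (1 : ℝ) | V.comap Prod.fst] =ᵐ[μ.prod ν]
      fun x => ν.real (Prod.mk x.1 ⁻¹' S) := by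
  have hS' : MeasurableSet S := MeasurableSpace.prod_mono_left hV mβ _ hS
  refine (condExp_comap_fst_ae_eq_integral hV (stronglyMeasurable_const.indicator hS)
    ((integrable_const 1).indicator hS')).trans (Filter.Eventually.of_forall fun x => ?_)
  exact integral_indicator_one (measurable_prodMk_left hS')

theorem ae_measure_preimage_prodMk_eq_of_condExp_indicator_eq (hV : V ≤ mΩ) {S T : Set (Ω × β)}
    (hS : MeasurableSet[V.prod mβ] S) (hT : MeasurableSet[V.prod mβ] T)
    (h : (μ.prod ν)[S.indicator fun _ => (1 : ℝ) | V.comap Prod.fst] =ᵐ[μ.prod ν]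
      (μ.prod ν)[T.indicator fun _ => (1 : ℝ) | V.comap Prod.fst]) :
    ∀ᵐ ω ∂μ, ν (Prod.mk ω ⁻¹' S) = ν (Prod.mk ω ⁻¹' T) := by
  have hST := (condExp_indicator_comap_fst_ae_eq_measureReal hV hS).symm.trans
    (h.trans (condExp_indicator_comap_fst_ae_eq_measureReal hV hT))
  filter_upwards [Measure.ae_ae_of_ae_prod hST] with ω hω
  exact (measureReal_eq_measureReal_iff).1 (Filter.eventually_const.1 hω)

theorem ae_measure_preimage_eq_of_condExp_indicator_preimage_eq {γ : Type*}
    [TopologicalSpace γ] [TopologicalSpace.PseudoMetrizableSpace γ] [MeasurableSpace γ]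
    [BorelSpace γ] (hV : V ≤ mΩ) {f g : Ω × β → γ}
    (hf : AEStronglyMeasurable[V.prod mβ] f (μ.prod ν))
    (hg : AEStronglyMeasurable[V.prod mβ] g (μ.prod ν)) {B : Set γ} (hB : MeasurableSet B)
    (h : (μ.prod ν)[(f ⁻¹' B).indicator fun _ => (1 : ℝ) | V.comap Prod.fst] =ᵐ[μ.prod ν]
      (μ.prod ν)[(g ⁻¹' B).indicator fun _ => (1 : ℝ) | V.comap Prod.fst]) :
    ∀ᵐ ω ∂μ, ν ((fun y => f (ω, y)) ⁻¹' B) = ν ((fun y => g (ω, y)) ⁻¹' B) := by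
  have hpre {f : Ω × β → γ} (hf : AEStronglyMeasurable[V.prod mβ] f (μ.prod ν)) :
      f ⁻¹' B =ᵐ[μ.prod ν] hf.mk f ⁻¹' B :=
    hf.ae_eq_mk.mono fun _ hx => congrArg (· ∈ B) hx
  have hslice {f : Ω × β → γ} (hf : AEStronglyMeasurable[V.prod mβ] f (μ.prod ν)) :
      ∀ᵐ ω ∂μ, ν ((fun y => f (ω, y)) ⁻¹' B) = ν (Prod.mk ω ⁻¹' (hf.mk f ⁻¹' B)) :=
    (Measure.ae_ae_of_ae_prod (hpre hf)).mono fun _ hω => measure_congr hω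
  have hmk := ae_measure_preimage_prodMk_eq_of_condExp_indicator_eq hV
    (hf.stronglyMeasurable_mk.measurable hB) (hg.stronglyMeasurable_mk.measurable hB)
    ((condExp_congr_ae (indicator_ae_eq_of_ae_eq_set (hpre hf))).symm.trans
      (h.trans (condExp_congr_ae (indicator_ae_eq_of_ae_eq_set (hpre hg)))))
  filter_upwards [hslice hf, hslice hg, hmk] with ω hfω hgω hω
  rw [hfω, hgω, hω]

end Prod

instance isProbabilityMeasure_comap_volume_Ioo :
    IsProbabilityMeasure ((volume : Measure ℝ).comap (Subtype.val : Set.Ioo (0 : ℝ) 1 → ℝ)) :=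
  ⟨by rw [comap_subtype_coe_apply measurableSet_Ioo, Set.image_univ, Subtype.range_coe,
    Real.volume_Ioo, sub_zero, ofReal_one]⟩

end MeasureTheory

theorem ae_eq_of_antitone_sameCondDist_general
    {Ω : Type*} {mΩ : MeasurableSpace Ω} (μ : Measure Ω) [IsProbabilityMeasure μ]
    (V : MeasurableSpace Ω) (hV : V ≤ mΩ)
    (f g : Ω × Set.Ioo (0 : ℝ) 1 → ℝ)
    (hfV : AEStronglyMeasurable[V.prod inferInstance] f (prodLebIoo mΩ μ))
    (hgV : AEStronglyMeasurable[V.prod inferInstance] g (prodLebIoo mΩ μ))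
    (hfmono : ∀ ω : Ω, Antitone fun r : Set.Ioo (0 : ℝ) 1 => f (ω, r))
    (hgmono : ∀ ω : Ω, Antitone fun r : Set.Ioo (0 : ℝ) 1 => g (ω, r))
    (hdist : ∀ B : Set ℝ, MeasurableSet B →
      (prodLebIoo mΩ μ)[Set.indicator (f ⁻¹' B) (fun _ => (1 : ℝ)) |
          MeasurableSpace.comap Prod.fst V]
        =ᵐ[prodLebIoo mΩ μ]
          (prodLebIoo mΩ μ)[Set.indicator (g ⁻¹' B) (fun _ => (1 : ℝ)) |
            MeasurableSpace.comap Prod.fst V]) :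
    f =ᵐ[prodLebIoo mΩ μ] g := by
  have hVB :=
    MeasurableSpace.prod_mono_left hV (inferInstance : MeasurableSpace (Set.Ioo (0 : ℝ) 1))
  have hslices : ∀ᵐ ω ∂μ, ∀ q : ℚ, _ := ae_all_iff.2 fun q : ℚ =>
    ae_measure_preimage_eq_of_condExp_indicator_preimage_eq hV hfV hgV measurableSet_Ioi
      (hdist (Set.Ioi (q : ℝ)) measurableSet_Ioi)
  refine ae_eq_prod_of_ae_ae_eq (hfV.mono hVB) (hgV.mono hVB) ?_
  filter_upwards [hslices] with ω hω
  exact (hfmono ω).ae_eq_of_forall_measure_setOf_rat_lt_eq (hgmono ω) hω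

/-- Two `Lp(μ ⊗ λ)` functions that are a.e. `(V ⊗ Borel)`-measurable and
nonincreasing in the second coordinate, and which have the same conditional distribution over
`π⁻¹(V)`, must be a.e. equal. -/
theorem ae_eq_of_antitone_sameCondDist
    {Ω : Type*} {mΩ : MeasurableSpace Ω} (μ : Measure Ω) [IsProbabilityMeasure μ]
    (p : ℝ≥0∞) (hp : 1 ≤ p) (hp' : p ≠ ⊤)
    (V : MeasurableSpace Ω) (hV : V ≤ mΩ)
    (f g : Ω × Set.Ioo (0 : ℝ) 1 → ℝ)
    (hf : MemLp f p (prodLebIoo mΩ μ)) (hg : MemLp g p (prodLebIoo mΩ μ))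
    (hfV : AEStronglyMeasurable[V.prod inferInstance] f (prodLebIoo mΩ μ))
    (hgV : AEStronglyMeasurable[V.prod inferInstance] g (prodLebIoo mΩ μ))
    (hfmono : ∀ ω : Ω, Antitone fun r : Set.Ioo (0 : ℝ) 1 => f (ω, r))
    (hgmono : ∀ ω : Ω, Antitone fun r : Set.Ioo (0 : ℝ) 1 => g (ω, r))
    (hdist : ∀ B : Set ℝ, MeasurableSet B →
      (prodLebIoo mΩ μ)[Set.indicator (f ⁻¹' B) (fun _ => (1 : ℝ)) |
          MeasurableSpace.comap Prod.fst V]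
        =ᵐ[prodLebIoo mΩ μ]
          (prodLebIoo mΩ μ)[Set.indicator (g ⁻¹' B) (fun _ => (1 : ℝ)) |
            MeasurableSpace.comap Prod.fst V]) :
    f =ᵐ[prodLebIoo mΩ μ] g :=
  ae_eq_of_antitone_sameCondDist_general μ V hV f g hfV hgV hfmono hgmono hdist
end
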